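/- arXiv:0712.4396 — 7 statements merged into one kernel-verified Lean document; each statement's English description precedes it below -/
import Mathlib

section
/- Under the stated abstract setting, if λ_m < λ_{m+1}, then Σ_{i=1}^m ρ_i ≤ (Σ_{i=1}^m Λ_i)/(λ_{m+1} − λ_m). -/
open scoped ComplexInnerProductSpace

open RCLike

/-! With `C = [A, B] uᵢ = (A - λᵢ) (B uᵢ)`, split `B uᵢ = φ + p` where `p` is its component along
`u₁, …, u_m`. The Rayleigh–Ritz property gives `(λ_{m+1} - λ_m) ‖φ‖² ≤ Re ⟪C, φ⟫ ≤ ‖C‖ ‖φ‖`, hence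
`Re ⟪C, φ⟫ ≤ ‖C‖² / (λ_{m+1} - λ_m)`. The remaining part `Re ⟪C, p⟫ = ∑ⱼ (λⱼ - λᵢ) |⟪uⱼ, B uᵢ⟫|²`
is antisymmetric in `(i, j)` because `B` is symmetric, so it cancels after summing over `i ≤ m`. -/

section SpectralGap

variable {𝕜 E ι : Type*} [RCLike 𝕜] [NormedAddCommGroup E] [InnerProductSpace 𝕜 E]

local notation "⟪" x ", " y "⟫" => inner 𝕜 x y

theorem re_inner_le_norm_sq_div {x y : E} {g : ℝ} (hg : 0 < g)
    (h : g * ‖y‖ ^ 2 ≤ re ⟪x, y⟫) : re ⟪x, y⟫ ≤ ‖x‖ ^ 2 / g := by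
  rcases le_or_gt (re ⟪x, y⟫) 0 with hle | hpos
  · exact hle.trans (by positivity)
  have hcs : re ⟪x, y⟫ ≤ ‖x‖ * ‖y‖ := (re_le_norm _).trans (norm_inner_le_norm x y)
  rw [le_div_iff₀ hg]
  nlinarith [mul_self_le_mul_self hpos.le hcs, mul_le_mul_of_nonneg_left h (sq_nonneg ‖x‖)]

variable [Fintype ι] {u : ι → E}

theorem Orthonormal.inner_sub_sum_inner_smul (hu : Orthonormal 𝕜 u) (x : E) (j : ι) :
    ⟪u j, x - ∑ i, ⟪u i, x⟫ • u i⟫ = 0 := by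
  rw [inner_sub_right, hu.inner_right_fintype, sub_self]

variable {T : E →ₗ[𝕜] E} {d : ι → ℝ}

theorem LinearMap.IsSymmetric.re_inner_apply_sum_inner_smul (hT : T.IsSymmetric)
    (heig : ∀ j, T (u j) = (d j : 𝕜) • u j) (x : E) :
    re ⟪T x, ∑ j, ⟪u j, x⟫ • u j⟫ = ∑ j, d j * ‖⟪u j, x⟫‖ ^ 2 := by
  have hterm : ∀ j, ⟪u j, x⟫ * ⟪T x, u j⟫ = ((d j * ‖⟪u j, x⟫‖ ^ 2 : ℝ) : 𝕜) := by
    intro j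
    rw [hT, heig, inner_smul_right, ← inner_conj_symm x, mul_left_comm, mul_conj]
    push_cast
    ring
  simp only [inner_sum, inner_smul_right, hterm, ← ofReal_sum, ofReal_re]

theorem inner_apply_sub_sum_inner_smul (hu : Orthonormal 𝕜 u)
    (heig : ∀ j, T (u j) = (d j : 𝕜) • u j) (x : E) :
    ⟪T x, x - ∑ j, ⟪u j, x⟫ • u j⟫ =
      ⟪T (x - ∑ j, ⟪u j, x⟫ • u j), x - ∑ j, ⟪u j, x⟫ • u j⟫ := by
  have hperp : ⟪T (∑ j, ⟪u j, x⟫ • u j), x - ∑ j, ⟪u j, x⟫ • u j⟫ = 0 := by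
    simp only [map_sum, map_smul, heig, sum_inner, inner_smul_left,
      hu.inner_sub_sum_inner_smul, mul_zero, Finset.sum_const_zero]
  rw [map_sub, inner_sub_left, hperp, sub_zero]

theorem LinearMap.IsSymmetric.re_inner_apply_self_le (hT : T.IsSymmetric) (hu : Orthonormal 𝕜 u)
    (heig : ∀ j, T (u j) = (d j : 𝕜) • u j) {g : ℝ} (hg : 0 < g)
    (hgap : ∀ φ, (∀ j, ⟪u j, φ⟫ = 0) → g * ‖φ‖ ^ 2 ≤ re ⟪T φ, φ⟫) (x : E) :
    re ⟪T x, x⟫ ≤ ‖T x‖ ^ 2 / g + ∑ j, d j * ‖⟪u j, x⟫‖ ^ 2 := by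
  set p := ∑ j, ⟪u j, x⟫ • u j
  have hφ : g * ‖x - p‖ ^ 2 ≤ re ⟪T x, x - p⟫ := by
    rw [inner_apply_sub_sum_inner_smul hu heig]
    exact hgap _ (hu.inner_sub_sum_inner_smul x)
  calc re ⟪T x, x⟫ = re ⟪T x, x - p⟫ + re ⟪T x, p⟫ := by
        rw [← map_add, ← inner_add_right, sub_add_cancel]
    _ ≤ ‖T x‖ ^ 2 / g + ∑ j, d j * ‖⟪u j, x⟫‖ ^ 2 := by
        rw [hT.re_inner_apply_sum_inner_smul heig]
        exact add_le_add_left (re_inner_le_norm_sq_div hg hφ) _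


variable {A : E →ₗ[𝕜] E} {lam : ι → ℝ}

theorem LinearMap.IsSymmetric.re_inner_commutator_apply_le (hA : A.IsSymmetric)
    (hu : Orthonormal 𝕜 u) (heig : ∀ j, A (u j) = (lam j : 𝕜) • u j) {Λ : ℝ}
    (hRR : ∀ φ, (∀ j, ⟪u j, φ⟫ = 0) → Λ * ‖φ‖ ^ 2 ≤ re ⟪A φ, φ⟫)
    (B : E →ₗ[𝕜] E) {w : E} {μ : ℝ} (hw : A w = (μ : 𝕜) • w) {g : ℝ} (hg : 0 < g)
    (hgμ : g ≤ Λ - μ) :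
    re ⟪(A ∘ₗ B - B ∘ₗ A) w, B w⟫ ≤
      ‖(A ∘ₗ B - B ∘ₗ A) w‖ ^ 2 / g + ∑ j, (lam j - μ) * ‖⟪u j, B w⟫‖ ^ 2 := by
  set T := A - (μ : 𝕜) • LinearMap.id
  have hT : T.IsSymmetric := hA.sub (LinearMap.IsSymmetric.id.smul (conj_ofReal μ))
  have hTapply : ∀ x, T x = A x - (μ : 𝕜) • x := fun x => rfl
  have hcomm : (A ∘ₗ B - B ∘ₗ A) w = T (B w) := by
    simp only [LinearMap.sub_apply, LinearMap.comp_apply, hw, map_smul, hTapply]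
  have hTeig : ∀ j, T (u j) = ((lam j - μ : ℝ) : 𝕜) • u j := by
    intro j
    rw [hTapply, heig, ofReal_sub, sub_smul]
  have hTgap : ∀ φ, (∀ j, ⟪u j, φ⟫ = 0) → g * ‖φ‖ ^ 2 ≤ re ⟪T φ, φ⟫ := by
    intro φ hφ
    rw [hTapply, inner_sub_left, map_sub, inner_smul_left, conj_ofReal, inner_self_eq_norm_sq_to_K,
      ← ofReal_pow, ← ofReal_mul, ofReal_re]
    nlinarith [hRR φ hφ, sq_nonneg ‖φ‖]
  rw [hcomm]
  exact hT.re_inner_apply_self_le hu hTeig hg hTgap (B w)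

end SpectralGap

theorem Finset.sum_sum_eq_zero_of_antisymm {α R : Type*} [NonAssocRing R] [NoZeroDivisors R]
    [CharZero R] (s : Finset α) {f : α → α → R} (hf : ∀ i j, f i j = -f j i) :
    ∑ i ∈ s, ∑ j ∈ s, f i j = 0 := by
  rw [← CharZero.eq_neg_self_iff, ← Finset.sum_neg_distrib]
  conv_lhs => rw [Finset.sum_comm]
  simp only [← Finset.sum_neg_distrib, ← hf]

theorem stmt0_general
    {H : Type*} [NormedAddCommGroup H] [InnerProductSpace ℂ H]
    (A : H →ₗ[ℂ] H)
    (hAsymm : ∀ x y : H, ⟪A x, y⟫ = ⟪x, A y⟫)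
    (u : ℕ → H) (lam : ℕ → ℝ)
    (huon : ∀ i j : ℕ, 1 ≤ i → 1 ≤ j → ⟪u i, u j⟫ = if i = j then 1 else 0)
    (hmono : ∀ i j : ℕ, 1 ≤ i → i ≤ j → lam i ≤ lam j)
    (heig : ∀ i : ℕ, 1 ≤ i → A (u i) = (lam i : ℂ) • u i)
    (N : ℕ)
    (B : Fin N → H →ₗ[ℂ] H)
    (hBsymm : ∀ (k : Fin N) (x y : H), ⟪B k x, y⟫ = ⟪x, B k y⟫)
    (m : ℕ)
    (hRR : ∀ φ : H, (∀ j : ℕ, 1 ≤ j → j ≤ m → ⟪φ, u j⟫ = 0) →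
      lam (m + 1) * ‖φ‖ ^ 2 ≤ (⟪A φ, φ⟫).re)
    (hgap : lam m < lam (m + 1))
 :
    ∑ i ∈ Finset.Icc 1 m, (∑ k : Fin N, (⟪(A ∘ₗ B k - B k ∘ₗ A) (u i), B k (u i)⟫).re)
      ≤ (∑ i ∈ Finset.Icc 1 m, (∑ k : Fin N, ‖(A ∘ₗ B k - B k ∘ₗ A) (u i)‖ ^ 2))
        / (lam (m + 1) - lam m) := by
  set s := Finset.Icc 1 m
  set g := lam (m + 1) - lam m
  have hu : Orthonormal ℂ (fun j : s => u j) := by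
    refine orthonormal_iff_ite.mpr fun i j => ?_
    simp only [huon i j (Finset.mem_Icc.mp i.2).1 (Finset.mem_Icc.mp j.2).1, Subtype.ext_iff]
  have hRR' : ∀ φ, (∀ j : s, ⟪u j, φ⟫ = 0) → lam (m + 1) * ‖φ‖ ^ 2 ≤ (⟪A φ, φ⟫).re :=
    fun φ hφ => hRR φ fun j hj hjm => inner_eq_zero_symm.mp (hφ ⟨j, Finset.mem_Icc.mpr ⟨hj, hjm⟩⟩)
  have hbound : ∀ i ∈ s, ∀ k, (⟪(A ∘ₗ B k - B k ∘ₗ A) (u i), B k (u i)⟫).re ≤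
      ‖(A ∘ₗ B k - B k ∘ₗ A) (u i)‖ ^ 2 / g + ∑ j ∈ s, (lam j - lam i) * ‖⟪u j, B k (u i)⟫‖ ^ 2 := by
    intro i hi k
    obtain ⟨hi1, him⟩ := Finset.mem_Icc.mp hi
    rw [← Finset.sum_coe_sort s]
    exact LinearMap.IsSymmetric.re_inner_commutator_apply_le hAsymm hu
      (fun j => heig j (Finset.mem_Icc.mp j.2).1) hRR' (B k) (heig i hi1) (by linarith)
      (by linarith [hmono i m hi1 him])
  have hcancel : ∑ i ∈ s, ∑ j ∈ s, ∑ k, (lam j - lam i) * ‖⟪u j, B k (u i)⟫‖ ^ 2 = 0 := by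
    refine s.sum_sum_eq_zero_of_antisymm fun i j => ?_
    rw [← Finset.sum_neg_distrib]
    refine Finset.sum_congr rfl fun k _ => ?_
    rw [← hBsymm, norm_inner_symm]
    ring
  calc _ ≤ ∑ i ∈ s, ∑ k, (‖(A ∘ₗ B k - B k ∘ₗ A) (u i)‖ ^ 2 / g
          + ∑ j ∈ s, (lam j - lam i) * ‖⟪u j, B k (u i)⟫‖ ^ 2) :=
        Finset.sum_le_sum fun i hi => Finset.sum_le_sum fun k _ => hbound i hi k
    _ = _ := by
        simp only [Finset.sum_add_distrib, Finset.sum_div]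
        rw [Finset.sum_congr rfl fun i _ => Finset.sum_comm, hcancel, add_zero]

theorem stmt0
    {H : Type*} [NormedAddCommGroup H] [InnerProductSpace ℂ H] [CompleteSpace H]
    (A : H →ₗ[ℂ] H)
    (hAsymm : ∀ x y : H, ⟪A x, y⟫ = ⟪x, A y⟫)
    (u : ℕ → H) (lam : ℕ → ℝ)
    (huon : ∀ i j : ℕ, 1 ≤ i → 1 ≤ j → ⟪u i, u j⟫ = if i = j then 1 else 0)
    (hmono : ∀ i j : ℕ, 1 ≤ i → i ≤ j → lam i ≤ lam j)
    (heig : ∀ i : ℕ, 1 ≤ i → A (u i) = (lam i : ℂ) • u i)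
    (N : ℕ) (hN : 1 ≤ N)
    (B : Fin N → H →ₗ[ℂ] H)
    (hBsymm : ∀ (k : Fin N) (x y : H), ⟪B k x, y⟫ = ⟪x, B k y⟫)
    (m : ℕ) (hm : 1 ≤ m)
    (hRR : ∀ φ : H, (∀ j : ℕ, 1 ≤ j → j ≤ m → ⟪φ, u j⟫ = 0) →
      lam (m + 1) * ‖φ‖ ^ 2 ≤ (⟪A φ, φ⟫).re)
    (hgap : lam m < lam (m + 1))
 :
    ∑ i ∈ Finset.Icc 1 m, (∑ k : Fin N, (⟪(A ∘ₗ B k - B k ∘ₗ A) (u i), B k (u i)⟫).re)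
      ≤ (∑ i ∈ Finset.Icc 1 m, (∑ k : Fin N, ‖(A ∘ₗ B k - B k ∘ₗ A) (u i)‖ ^ 2))
        / (lam (m + 1) - lam m) :=
  stmt0_general A hAsymm u lam huon hmono heig N B hBsymm m hRR hgap
end

section
/- Under the stated abstract setting, let g : ℝ → ℝ satisfy g(λ_i) ≥ 0 for every i ∈ {1, …, m} and g(λ_i) ≤ g(λ_j) whenever 1 ≤ i ≤ j ≤ m (g is nonnegative and nondecreasing on the eigenvalues λ_1, …, λ_m). Then Σ_{i=1}^m (λ_{m+1} − λ_i)² g(λ_i) ρ_i ≤ Σ_{i=1}^m (λ_{m+1} − λ_i) g(λ_i) Λ_i. -/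
open scoped ComplexInnerProductSpace InnerProductSpace
open Finset RCLike

/-!
Fix `i ≤ m`, put `δ = λ_{m+1} - λ_i` and `v = B u_i`, so that `[A, B] u_i = (A - λ_i) v`.
Splitting `v = P v + φ` along `span {u_1, …, u_m}` and its orthogonal complement, `A - λ_i`
respects the splitting, so `Re ⟪[A, B] u_i, v⟫` and `‖[A, B] u_i‖²` split into a finite sum over
the coefficients `⟪u_j, v⟫` plus a term in `φ`. On `φ`, Rayleigh–Ritz gives
`δ ‖φ‖² ≤ Re ⟪(A - λ_i) φ, φ⟫`, and with Cauchy–Schwarz `δ² Re ⟪(A - λ_i) φ, φ⟫ ≤ δ ‖(A - λ_i) φ‖²`.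
What remains after weighting by `g (λ_i)` and summing is
`∑_{i,j} g (λ_i) (λ_j - λ_i) δ_i δ_j |⟪u_j, B u_i⟫|²`, which is `≤ 0` after symmetrising in `i, j`:
the kernel is symmetric because `B` is, and `g (λ_i)` and `λ_i` are similarly ordered.
-/

section

variable {ι : Type*}

theorem MonovaryOn.sum_sum_mul_sub_mul_nonpos {s : Finset ι} {f g : ι → ℝ} {K : ι → ι → ℝ}
    (hfg : MonovaryOn f g s) (hK : ∀ i ∈ s, ∀ j ∈ s, K i j = K j i)
    (hK0 : ∀ i ∈ s, ∀ j ∈ s, 0 ≤ K i j) :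
    ∑ i ∈ s, ∑ j ∈ s, f i * ((g j - g i) * K i j) ≤ 0 := by
  have hpair : ∀ i ∈ s, ∀ j ∈ s,
      f i * ((g j - g i) * K i j) + f j * ((g i - g j) * K j i) ≤ 0 := by
    intro i hi j hj
    rw [hK j hj i hi]
    nlinarith [mul_nonneg (hfg.sub_mul_sub_nonneg hi hj) (hK0 i hi j hj)]
  have hsym := sum_nonpos fun i hi => sum_nonpos fun j hj => hpair i hi j hj
  simp only [sum_add_distrib] at hsym
  rw [sum_comm (f := fun i j => f j * ((g i - g j) * K j i))] at hsym
  linarith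

theorem MonovaryOn.sum_mul_le_sum_mul_of_le_add_sum {s : Finset ι} {f g x y : ι → ℝ}
    {K : ι → ι → ℝ} (hf : ∀ i ∈ s, 0 ≤ f i) (hfg : MonovaryOn f g s)
    (hK : ∀ i ∈ s, ∀ j ∈ s, K i j = K j i) (hK0 : ∀ i ∈ s, ∀ j ∈ s, 0 ≤ K i j)
    (hxy : ∀ i ∈ s, x i ≤ y i + ∑ j ∈ s, (g j - g i) * K i j) :
    ∑ i ∈ s, f i * x i ≤ ∑ i ∈ s, f i * y i :=
  calc ∑ i ∈ s, f i * x i ≤ ∑ i ∈ s, f i * (y i + ∑ j ∈ s, (g j - g i) * K i j) :=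
        sum_le_sum fun i hi => mul_le_mul_of_nonneg_left (hxy i hi) (hf i hi)
    _ = ∑ i ∈ s, f i * y i + ∑ i ∈ s, ∑ j ∈ s, f i * ((g j - g i) * K i j) := by
        simp only [mul_add, mul_sum, sum_add_distrib]
    _ ≤ ∑ i ∈ s, f i * y i := add_le_of_nonpos_right (hfg.sum_sum_mul_sub_mul_nonpos hK hK0)

theorem sq_mul_re_inner_le_mul_norm_sq {𝕜 E : Type*} [RCLike 𝕜] [NormedAddCommGroup E]
    [InnerProductSpace 𝕜 E] {w φ : E} {δ : ℝ} (hδ : 0 ≤ δ)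
    (h : δ * ‖φ‖ ^ 2 ≤ re ⟪w, φ⟫_𝕜) : δ ^ 2 * re ⟪w, φ⟫_𝕜 ≤ δ * ‖w‖ ^ 2 := by
  have hcs := mul_le_mul_of_nonneg_left (re_inner_le_norm (𝕜 := 𝕜) w φ) hδ
  have hr : δ * re ⟪w, φ⟫_𝕜 ≤ ‖w‖ ^ 2 := by
    nlinarith [sq_nonneg (‖w‖ - δ * ‖φ‖), mul_le_mul_of_nonneg_left h hδ]
  calc δ ^ 2 * re ⟪w, φ⟫_𝕜 = δ * (δ * re ⟪w, φ⟫_𝕜) := by ring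
    _ ≤ δ * ‖w‖ ^ 2 := mul_le_mul_of_nonneg_left hr hδ

theorem LinearMap.commutator_apply_of_apply_eq_smul {R M : Type*} [Ring R] [AddCommGroup M]
    [Module R M] {A : M →ₗ[R] M} (B : M →ₗ[R] M) {x : M} {c : R} (hx : A x = c • x) :
    (A ∘ₗ B - B ∘ₗ A) x = A (B x) - c • B x := by
  simp [hx]

theorem LinearMap.IsSymmetric.norm_inner_apply_comm {𝕜 E : Type*} [RCLike 𝕜]
    [NormedAddCommGroup E] [InnerProductSpace 𝕜 E] {B : E →ₗ[𝕜] E} (hB : B.IsSymmetric)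
    (x y : E) : ‖⟪x, B y⟫_𝕜‖ = ‖⟪y, B x⟫_𝕜‖ := by
  rw [← hB, ← inner_conj_symm, RCLike.norm_conj]

variable {H : Type*} [NormedAddCommGroup H] [InnerProductSpace ℂ H]
  {A : H →ₗ[ℂ] H} {e : ι → H} {μ : ι → ℝ}

theorem sum_smul_inner_eq_zero [Fintype ι] (l : ι → ℂ) {x : H} (hx : ∀ j, ⟪e j, x⟫ = 0) :
    ⟪∑ j, l j • e j, x⟫ = 0 := by
  simp [hx]

theorem LinearMap.IsSymmetric.inner_apply_sub_smul_eq_zero (hA : A.IsSymmetric)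
    (heig : ∀ j, A (e j) = (μ j : ℂ) • e j) (c : ℝ) {x : H} (hx : ∀ j, ⟪e j, x⟫ = 0) (j : ι) :
    ⟪e j, A x - (c : ℂ) • x⟫ = 0 := by
  rw [inner_sub_right, ← hA, heig, inner_smul_left, inner_smul_right, hx]
  simp

theorem Orthonormal.inner_sub_sum_inner_smul_eq_zero [Fintype ι] (he : Orthonormal ℂ e) (v : H)
    (j : ι) : ⟪e j, v - ∑ i, ⟪e i, v⟫ • e i⟫ = 0 := by
  rw [inner_sub_right, he.inner_right_fintype, sub_self]

theorem Orthonormal.re_inner_sum_ofReal_mul_smul [Fintype ι] (he : Orthonormal ℂ e) (r : ι → ℝ)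
    (b : ι → ℂ) : (⟪∑ j, ((r j : ℂ) * b j) • e j, ∑ j, b j • e j⟫).re = ∑ j, r j * ‖b j‖ ^ 2 := by
  rw [he.inner_sum, Complex.re_sum]
  refine sum_congr rfl fun j _ => ?_
  rw [map_mul, Complex.conj_ofReal, mul_assoc, Complex.conj_mul']
  norm_cast

theorem Orthonormal.norm_sum_ofReal_mul_smul_sq [Fintype ι] (he : Orthonormal ℂ e) (r : ι → ℝ)
    (b : ι → ℂ) : ‖∑ j, ((r j : ℂ) * b j) • e j‖ ^ 2 = ∑ j, r j ^ 2 * ‖b j‖ ^ 2 := by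
  rw [@norm_sq_eq_re_inner ℂ, he.inner_sum, map_sum]
  refine sum_congr rfl fun j _ => ?_
  rw [Complex.conj_mul', ← Complex.ofReal_pow, RCLike.re_to_complex, Complex.ofReal_re,
    norm_mul, Complex.norm_real, Real.norm_eq_abs, mul_pow, sq_abs]

theorem apply_sub_smul_eq_sum_add [Fintype ι] (heig : ∀ j, A (e j) = (μ j : ℂ) • e j) (c : ℝ)
    (a : ι → ℂ) (v : H) :
    A v - (c : ℂ) • v = ∑ j, (((μ j - c : ℝ) : ℂ) * a j) • e j
      + (A (v - ∑ j, a j • e j) - (c : ℂ) • (v - ∑ j, a j • e j)) := by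
  simp only [map_sub, map_sum, map_smul, heig, smul_smul, smul_sub, smul_sum,
    Complex.ofReal_sub, sub_mul, sub_smul, sum_sub_distrib]
  simp only [mul_comm]
  abel

theorem sq_mul_re_inner_apply_sub_smul_le {φ : H} {Λ c : ℝ} (hc : c ≤ Λ)
    (hφ : Λ * ‖φ‖ ^ 2 ≤ (⟪A φ, φ⟫).re) :
    (Λ - c) ^ 2 * (⟪A φ - (c : ℂ) • φ, φ⟫).re ≤ (Λ - c) * ‖A φ - (c : ℂ) • φ‖ ^ 2 := by
  refine sq_mul_re_inner_le_mul_norm_sq (𝕜 := ℂ) (sub_nonneg.2 hc) ?_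
  have hφφ : (⟪φ, φ⟫).re = ‖φ‖ ^ 2 := by
    rw [← RCLike.re_to_complex]; exact inner_self_eq_norm_sq φ
  rw [inner_sub_left, inner_smul_left, Complex.conj_ofReal, RCLike.re_to_complex,
    Complex.sub_re, Complex.re_ofReal_mul, hφφ]
  linarith

theorem LinearMap.IsSymmetric.sq_mul_re_inner_sub_smul_le [Fintype ι] (hA : A.IsSymmetric)
    (he : Orthonormal ℂ e) (heig : ∀ j, A (e j) = (μ j : ℂ) • e j) {Λ c : ℝ} (hc : c ≤ Λ)
    (hRR : ∀ φ, (∀ j, ⟪φ, e j⟫ = 0) → Λ * ‖φ‖ ^ 2 ≤ (⟪A φ, φ⟫).re) (v : H) :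
    (Λ - c) ^ 2 * (⟪A v - (c : ℂ) • v, v⟫).re ≤ (Λ - c) * ‖A v - (c : ℂ) • v‖ ^ 2
      + ∑ j, (μ j - c) * ((Λ - c) * (Λ - μ j) * ‖⟪e j, v⟫‖ ^ 2) := by
  set a : ι → ℂ := fun j => ⟪e j, v⟫
  set P := ∑ j, a j • e j
  set φ := v - P
  set Q := ∑ j, (((μ j - c : ℝ) : ℂ) * a j) • e j
  set w := A φ - (c : ℂ) • φ
  have hφ : ∀ j, ⟪e j, φ⟫ = 0 := he.inner_sub_sum_inner_smul_eq_zero v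
  have hw : ∀ j, ⟪e j, w⟫ = 0 := hA.inner_apply_sub_smul_eq_zero heig c hφ
  have hT : A v - (c : ℂ) • v = Q + w := apply_sub_smul_eq_sum_add heig c a v
  have hre : (⟪A v - (c : ℂ) • v, v⟫).re = ∑ j, (μ j - c) * ‖a j‖ ^ 2 + (⟪w, φ⟫).re := by
    have hwP : ⟪w, P⟫ = 0 := by rw [← inner_conj_symm, sum_smul_inner_eq_zero _ hw, map_zero]
    rw [hT, show v = P + φ by simp [φ], inner_add_left, inner_add_right, inner_add_right,
      sum_smul_inner_eq_zero _ hφ, hwP, add_zero, zero_add, Complex.add_re,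
      he.re_inner_sum_ofReal_mul_smul]
  have hnorm : ‖A v - (c : ℂ) • v‖ ^ 2 = ∑ j, (μ j - c) ^ 2 * ‖a j‖ ^ 2 + ‖w‖ ^ 2 := by
    rw [hT, norm_add_sq (𝕜 := ℂ), sum_smul_inner_eq_zero _ hw, he.norm_sum_ofReal_mul_smul_sq]
    simp
  have hcompl : (Λ - c) ^ 2 * (⟪w, φ⟫).re ≤ (Λ - c) * ‖w‖ ^ 2 :=
    sq_mul_re_inner_apply_sub_smul_le hc (hRR φ fun j => by rw [← inner_conj_symm, hφ, map_zero])
  have hsum : (Λ - c) ^ 2 * ∑ j, (μ j - c) * ‖a j‖ ^ 2 = (Λ - c) * ∑ j, (μ j - c) ^ 2 * ‖a j‖ ^ 2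
      + ∑ j, (μ j - c) * ((Λ - c) * (Λ - μ j) * ‖a j‖ ^ 2) := by
    simp only [mul_sum, ← sum_add_distrib]
    exact sum_congr rfl fun j _ => by ring
  rw [hre, hnorm]
  linarith

theorem LinearMap.IsSymmetric.sq_mul_sum_re_inner_commutator_le {κ : Type*} [Fintype ι]
    [Fintype κ] (hA : A.IsSymmetric) (he : Orthonormal ℂ e)
    (heig : ∀ j, A (e j) = (μ j : ℂ) • e j) {Λ c : ℝ} (hc : c ≤ Λ)
    (hRR : ∀ φ, (∀ j, ⟪φ, e j⟫ = 0) → Λ * ‖φ‖ ^ 2 ≤ (⟪A φ, φ⟫).re) {x : H}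
    (hx : A x = (c : ℂ) • x) (B : κ → H →ₗ[ℂ] H) :
    (Λ - c) ^ 2 * ∑ k, (⟪(A ∘ₗ B k - B k ∘ₗ A) x, B k x⟫).re
      ≤ (Λ - c) * ∑ k, ‖(A ∘ₗ B k - B k ∘ₗ A) x‖ ^ 2
        + ∑ j, (μ j - c) * ((Λ - c) * (Λ - μ j) * ∑ k, ‖⟪e j, B k x⟫‖ ^ 2) := by
  simp only [LinearMap.commutator_apply_of_apply_eq_smul _ hx, mul_sum]
  rw [sum_comm, ← sum_add_distrib]
  exact sum_le_sum fun k _ => hA.sq_mul_re_inner_sub_smul_le he heig hc hRR (B k x)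

end

theorem stmt3_general
    {H : Type*} [NormedAddCommGroup H] [InnerProductSpace ℂ H]
    (A : H →ₗ[ℂ] H)
    (hAsymm : ∀ x y : H, ⟪A x, y⟫ = ⟪x, A y⟫)
    (u : ℕ → H) (lam : ℕ → ℝ)
    (huon : ∀ i j : ℕ, 1 ≤ i → 1 ≤ j → ⟪u i, u j⟫ = if i = j then 1 else 0)
    (hmono : ∀ i j : ℕ, 1 ≤ i → i ≤ j → lam i ≤ lam j)
    (heig : ∀ i : ℕ, 1 ≤ i → A (u i) = (lam i : ℂ) • u i)
    (N : ℕ)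
    (B : Fin N → H →ₗ[ℂ] H)
    (hBsymm : ∀ (k : Fin N) (x y : H), ⟪B k x, y⟫ = ⟪x, B k y⟫)
    (m : ℕ)
    (hRR : ∀ φ : H, (∀ j : ℕ, 1 ≤ j → j ≤ m → ⟪φ, u j⟫ = 0) →
      lam (m + 1) * ‖φ‖ ^ 2 ≤ (⟪A φ, φ⟫).re)
    (g : ℝ → ℝ)
    (hg0 : ∀ i : ℕ, 1 ≤ i → i ≤ m → 0 ≤ g (lam i))
    (hgmono : ∀ i j : ℕ, 1 ≤ i → i ≤ j → j ≤ m → g (lam i) ≤ g (lam j)) :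
    ∑ i ∈ Finset.Icc 1 m, (lam (m + 1) - lam i) ^ 2 * g (lam i) * (∑ k : Fin N, (⟪(A ∘ₗ B k - B k ∘ₗ A) (u i), B k (u i)⟫).re)
      ≤ ∑ i ∈ Finset.Icc 1 m, (lam (m + 1) - lam i) * g (lam i) * (∑ k : Fin N, ‖(A ∘ₗ B k - B k ∘ₗ A) (u i)‖ ^ 2) := by
  set s := Finset.Icc 1 m
  set K : ℕ → ℕ → ℝ := fun i j =>
    (lam (m + 1) - lam i) * (lam (m + 1) - lam j) * ∑ k, ‖⟪u j, B k (u i)⟫‖ ^ 2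
  have hlam : ∀ i ∈ s, lam i ≤ lam (m + 1) := fun i hi =>
    hmono i _ (mem_Icc.1 hi).1 (Nat.le_succ_of_le (mem_Icc.1 hi).2)
  have hmv : MonovaryOn (fun i => g (lam i)) lam s :=
    MonotoneOn.monovaryOn (fun i hi j hj hij => hgmono i j (mem_Icc.1 hi).1 hij (mem_Icc.1 hj).2)
      fun i hi j _ hij => hmono i j (mem_Icc.1 hi).1 hij
  have he : Orthonormal ℂ (fun j : s => u j) := orthonormal_iff_ite.2 fun i j => by
    rw [huon i j (mem_Icc.1 i.2).1 (mem_Icc.1 j.2).1]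
    exact if_congr Subtype.ext_iff.symm rfl rfl
  have hK : ∀ i ∈ s, ∀ j ∈ s, K i j = K j i := fun i _ j _ => by
    have hB k : ‖⟪u j, B k (u i)⟫‖ = ‖⟪u i, B k (u j)⟫‖ :=
      LinearMap.IsSymmetric.norm_inner_apply_comm (hBsymm k) _ _
    simp only [K, hB]
    ring
  have hK0 : ∀ i ∈ s, ∀ j ∈ s, 0 ≤ K i j := fun i hi j hj =>
    mul_nonneg (mul_nonneg (sub_nonneg.2 (hlam i hi)) (sub_nonneg.2 (hlam j hj)))
      (sum_nonneg fun _ _ => sq_nonneg _)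
  have hpt : ∀ i ∈ s, (lam (m + 1) - lam i) ^ 2 * ∑ k, (⟪(A ∘ₗ B k - B k ∘ₗ A) (u i), B k (u i)⟫).re
      ≤ (lam (m + 1) - lam i) * ∑ k, ‖(A ∘ₗ B k - B k ∘ₗ A) (u i)‖ ^ 2
        + ∑ j ∈ s, (lam j - lam i) * K i j := fun i hi => by
    have := LinearMap.IsSymmetric.sq_mul_sum_re_inner_commutator_le hAsymm he
      (fun j => heig j (mem_Icc.1 j.2).1) (hlam i hi)
      (fun φ hφ => hRR φ fun j h1 h2 => hφ ⟨j, mem_Icc.2 ⟨h1, h2⟩⟩) (heig i (mem_Icc.1 hi).1) B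
    rwa [sum_coe_sort s (fun j => (lam j - lam i) * K i j)] at this
  convert hmv.sum_mul_le_sum_mul_of_le_add_sum
    (fun i hi => hg0 i (mem_Icc.1 hi).1 (mem_Icc.1 hi).2) hK hK0 hpt using 2 <;> ring

theorem stmt3
    {H : Type*} [NormedAddCommGroup H] [InnerProductSpace ℂ H] [CompleteSpace H]
    (A : H →ₗ[ℂ] H)
    (hAsymm : ∀ x y : H, ⟪A x, y⟫ = ⟪x, A y⟫)
    (u : ℕ → H) (lam : ℕ → ℝ)
    (huon : ∀ i j : ℕ, 1 ≤ i → 1 ≤ j → ⟪u i, u j⟫ = if i = j then 1 else 0)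
    (hmono : ∀ i j : ℕ, 1 ≤ i → i ≤ j → lam i ≤ lam j)
    (heig : ∀ i : ℕ, 1 ≤ i → A (u i) = (lam i : ℂ) • u i)
    (N : ℕ) (hN : 1 ≤ N)
    (B : Fin N → H →ₗ[ℂ] H)
    (hBsymm : ∀ (k : Fin N) (x y : H), ⟪B k x, y⟫ = ⟪x, B k y⟫)
    (m : ℕ) (hm : 1 ≤ m)
    (hRR : ∀ φ : H, (∀ j : ℕ, 1 ≤ j → j ≤ m → ⟪φ, u j⟫ = 0) →
      lam (m + 1) * ‖φ‖ ^ 2 ≤ (⟪A φ, φ⟫).re)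
    (g : ℝ → ℝ)
    (hg0 : ∀ i : ℕ, 1 ≤ i → i ≤ m → 0 ≤ g (lam i))
    (hgmono : ∀ i j : ℕ, 1 ≤ i → i ≤ j → j ≤ m → g (lam i) ≤ g (lam j)) :
    ∑ i ∈ Finset.Icc 1 m, (lam (m + 1) - lam i) ^ 2 * g (lam i) * (∑ k : Fin N, (⟪(A ∘ₗ B k - B k ∘ₗ A) (u i), B k (u i)⟫).re)
      ≤ ∑ i ∈ Finset.Icc 1 m, (lam (m + 1) - lam i) * g (lam i) * (∑ k : Fin N, ‖(A ∘ₗ B k - B k ∘ₗ A) (u i)‖ ^ 2) :=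
  stmt3_general A hAsymm u lam huon hmono heig N B hBsymm m hRR g hg0 hgmono
end

section
/- Under the stated abstract setting with (u_i)_{i≥1} a Hilbert (orthonormal) basis of H, if λ_m < λ_{m+1}, then for every real p ≥ 2: Σ_{i=1}^m (λ_{m+1} − λ_i)^p ρ_i ≤ (p/2) Σ_{i=1}^m (λ_{m+1} − λ_i)^{p−1} Λ_i, where the powers are real powers. -/
/-!
It suffices to treat one `B = B_k` at a time. Fix `i ≤ m`, put `v = B u_i`, `d_i = λ_{m+1} - λ_i`
and split `v` into its components along `u_1, …, u_m` plus a remainder `φ ⟂ u_1, …, u_m`.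
Since `[A, B] u_i = (A - λ_i) v`, this splits `ρ_i` and `Λ_i` into `Σ_j (d_i - d_j) β_ij` and
`Σ_j (d_i - d_j)² β_ij`, with symmetric weights `β_ij = |⟨u_j, B u_i⟩|²`, plus remainders `R_i`
and `Q_i`. Rayleigh–Ritz gives `R_i = Re⟨(A - λ_i) φ, φ⟩ ≥ d_i ‖φ‖²`, which together with
Cauchy–Schwarz yields `0 ≤ d_i R_i ≤ Q_i`, hence `d_i^p R_i ≤ (p/2) d_i^(p-1) Q_i`. The double sums
are compared after symmetrising in `(i, j)`, using
`(a^p - b^p)(a - b) ≤ (p/2)(a^(p-1) + b^(p-1))(a - b)²` for `a, b ≥ 0`.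
-/

open Set RCLike
open scoped InnerProductSpace

namespace Real

theorem rpow_sub_rpow_le_mul_rpow_sub_one_mul {q a b : ℝ} (hq : 1 ≤ q) (hb : 0 ≤ b) (hba : b ≤ a) :
    a ^ q - b ^ q ≤ q * a ^ (q - 1) * (a - b) := by
  rcases hba.eq_or_lt with rfl | hba
  · simp
  have ha : 0 < a := hb.trans_lt hba
  have hslope := (convexOn_rpow hq).slope_le_of_hasDerivAt hb ha.le hba
    (hasDerivAt_rpow_const (Or.inl ha.ne'))
  rwa [slope_def_field, div_le_iff₀ (sub_pos.2 hba)] at hslope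

/-- The trapezoid rule overestimates `∫_b^a p t^(p-1) dt` because `t ↦ t^(p-1)` is convex. -/
theorem rpow_sub_rpow_le_trapezoid {p a b : ℝ} (hp : 2 ≤ p) (hb : 0 ≤ b) (hba : b ≤ a) :
    a ^ p - b ^ p ≤ p / 2 * (a ^ (p - 1) + b ^ (p - 1)) * (a - b) := by
  let F : ℝ → ℝ := fun x ↦ p / 2 * (x ^ (p - 1) + b ^ (p - 1)) * (x - b) - (x ^ p - b ^ p)
  have hF : ContinuousOn F (Ici b) := by
    have h₁ := continuous_rpow_const (q := p - 1) (by linarith)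
    have h₂ := continuous_rpow_const (q := p) (by linarith)
    fun_prop
  have hF' : ∀ x ∈ interior (Ici b), HasDerivWithinAt F
      (p / 2 * ((p - 1) * x ^ (p - 1 - 1) * (x - b) + (x ^ (p - 1) + b ^ (p - 1)))
        - p * x ^ (p - 1)) (interior (Ici b)) x := by
    intro x hx
    rw [interior_Ici] at hx
    have hx₀ : x ≠ 0 := (hb.trans_lt hx).ne'
    refine HasDerivAt.hasDerivWithinAt ?_
    have hderiv := ((((hasDerivAt_rpow_const (p := p - 1) (Or.inl hx₀)).add_const (b ^ (p - 1))).const_mul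
      (p / 2)).mul ((hasDerivAt_id x).sub_const b)).sub
      ((hasDerivAt_rpow_const (p := p) (Or.inl hx₀)).sub_const (b ^ p))
    convert hderiv using 1
    · rfl
    · simp only [id]; ring
  have hF'₀ : ∀ x ∈ interior (Ici b), 0 ≤ p / 2 * ((p - 1) * x ^ (p - 1 - 1) * (x - b)
      + (x ^ (p - 1) + b ^ (p - 1))) - p * x ^ (p - 1) := by
    intro x hx
    rw [interior_Ici] at hx
    have htangent := mul_le_mul_of_nonneg_left
      (rpow_sub_rpow_le_mul_rpow_sub_one_mul (q := p - 1) (by linarith) hb hx.le)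
      (by linarith : (0 : ℝ) ≤ p / 2)
    linarith
  have hFba := monotoneOn_of_hasDerivWithinAt_nonneg (convex_Ici b) hF hF' hF'₀ self_mem_Ici hba hba
  simp only [F, sub_self, mul_zero] at hFba
  linarith

theorem rpow_sub_rpow_mul_sub_le {p a b : ℝ} (hp : 2 ≤ p) (ha : 0 ≤ a) (hb : 0 ≤ b) :
    (a ^ p - b ^ p) * (a - b) ≤ p / 2 * (a ^ (p - 1) + b ^ (p - 1)) * (a - b) ^ 2 := by
  rcases le_total b a with hba | hab
  · nlinarith [rpow_sub_rpow_le_trapezoid hp hb hba, sub_nonneg.2 hba]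
  · nlinarith [rpow_sub_rpow_le_trapezoid hp ha hab, sub_nonneg.2 hab]

end Real

section Symmetrization

variable {ι : Type*} [Fintype ι]

theorem two_mul_sum_sum_mul_of_symm {R : Type*} [CommSemiring R] (f : ι → ι → R)
    {β : ι → ι → R} (hβ : ∀ i j, β i j = β j i) :
    2 * ∑ i, ∑ j, f i j * β i j = ∑ i, ∑ j, (f i j + f j i) * β i j := by
  simp only [two_mul, add_mul, Finset.sum_add_distrib]
  congr 1
  rw [Finset.sum_comm]
  exact Finset.sum_congr rfl fun i _ ↦ Finset.sum_congr rfl fun j _ ↦ by rw [hβ]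

theorem sum_sum_rpow_mul_sub_mul_le {p : ℝ} (hp : 2 ≤ p) {d : ι → ℝ} (hd : ∀ i, 0 ≤ d i)
    {β : ι → ι → ℝ} (hβ : ∀ i j, β i j = β j i) (hβ₀ : ∀ i j, 0 ≤ β i j) :
    ∑ i, ∑ j, d i ^ p * (d i - d j) * β i j
      ≤ p / 2 * ∑ i, ∑ j, d i ^ (p - 1) * (d i - d j) ^ 2 * β i j := by
  suffices 2 * ∑ i, ∑ j, d i ^ p * (d i - d j) * β i j
      ≤ p / 2 * (2 * ∑ i, ∑ j, d i ^ (p - 1) * (d i - d j) ^ 2 * β i j) by linarith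
  rw [two_mul_sum_sum_mul_of_symm _ hβ, two_mul_sum_sum_mul_of_symm _ hβ, Finset.mul_sum]
  refine Finset.sum_le_sum fun i _ ↦ ?_
  rw [Finset.mul_sum]
  refine Finset.sum_le_sum fun j _ ↦ ?_
  linear_combination mul_le_mul_of_nonneg_right (Real.rpow_sub_rpow_mul_sub_le hp (hd i) (hd j))
    (hβ₀ i j)

theorem sum_rpow_mul_le_of_symm {p : ℝ} (hp : 2 ≤ p) {d ρ Λ : ι → ℝ} (hd : ∀ i, 0 < d i)
    {β : ι → ι → ℝ} (hβ : ∀ i j, β i j = β j i) (hβ₀ : ∀ i j, 0 ≤ β i j)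
    (hρ : ∀ i, 0 ≤ ρ i - ∑ j, (d i - d j) * β i j)
    (hρΛ : ∀ i, d i * (ρ i - ∑ j, (d i - d j) * β i j) ≤ Λ i - ∑ j, (d i - d j) ^ 2 * β i j) :
    ∑ i, d i ^ p * ρ i ≤ p / 2 * ∑ i, d i ^ (p - 1) * Λ i := by
  have hdiag (i : ι) : d i ^ p * (ρ i - ∑ j, (d i - d j) * β i j)
      ≤ p / 2 * (d i ^ (p - 1) * (Λ i - ∑ j, (d i - d j) ^ 2 * β i j)) := by
    have hpow : 0 ≤ d i ^ (p - 1) := Real.rpow_nonneg (hd i).le _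
    have hQ : 0 ≤ Λ i - ∑ j, (d i - d j) ^ 2 * β i j :=
      (mul_nonneg (hd i).le (hρ i)).trans (hρΛ i)
    calc d i ^ p * (ρ i - ∑ j, (d i - d j) * β i j)
        = d i ^ (p - 1) * (d i * (ρ i - ∑ j, (d i - d j) * β i j)) := by
          rw [← mul_assoc, ← Real.rpow_add_one (hd i).ne', sub_add_cancel]
      _ ≤ d i ^ (p - 1) * (Λ i - ∑ j, (d i - d j) ^ 2 * β i j) := by gcongr; exact hρΛ i
      _ ≤ p / 2 * (d i ^ (p - 1) * (Λ i - ∑ j, (d i - d j) ^ 2 * β i j)) :=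
          le_mul_of_one_le_left (mul_nonneg hpow hQ) (by linarith)
  have hoff := sum_sum_rpow_mul_sub_mul_le hp (fun i ↦ (hd i).le) hβ hβ₀
  have hsum := Finset.sum_le_sum fun i (_ : i ∈ Finset.univ) ↦ hdiag i
  simp only [mul_sub, Finset.sum_sub_distrib, Finset.mul_sum] at hsum
  simp only [Finset.mul_sum, mul_assoc] at hoff ⊢
  linarith

end Symmetrization

section InnerProductSpace

variable {𝕜 H ι : Type*} [RCLike 𝕜] [NormedAddCommGroup H] [InnerProductSpace 𝕜 H]

theorem mul_re_inner_le_norm_sq {δ : ℝ} (hδ : 0 < δ) {w φ : H}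
    (h : δ * ‖φ‖ ^ 2 ≤ re ⟪w, φ⟫_𝕜) : δ * re ⟪w, φ⟫_𝕜 ≤ ‖w‖ ^ 2 := by
  have hcs := mul_le_mul_of_nonneg_left (re_inner_le_norm (𝕜 := 𝕜) w φ) hδ.le
  nlinarith [sq_nonneg (δ * ‖φ‖ - ‖w‖)]

theorem LinearMap.IsSymmetric.inner_apply_of_eigen {M : H →ₗ[𝕜] H} (hM : M.IsSymmetric) {v : H}
    {ν : ℝ} (hv : M v = (ν : 𝕜) • v) (x : H) : ⟪v, M x⟫_𝕜 = ν * ⟪v, x⟫_𝕜 := by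
  rw [← hM, hv, inner_smul_left, conj_ofReal]

section OrthonormalFamily

variable [Fintype ι] {e : ι → H}

variable (𝕜) in
def perpComponent (e : ι → H) (x : H) : H := x - ∑ j, ⟪e j, x⟫_𝕜 • e j

theorem sum_inner_smul_add_perpComponent (e : ι → H) (x : H) :
    ∑ j, ⟪e j, x⟫_𝕜 • e j + perpComponent 𝕜 e x = x :=
  add_sub_cancel _ _

theorem inner_perpComponent (he : Orthonormal 𝕜 e) (x : H) (j : ι) :
    ⟪e j, perpComponent 𝕜 e x⟫_𝕜 = 0 := by
  rw [perpComponent, inner_sub_right, he.inner_right_fintype, sub_self]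

theorem inner_sum_smul_perpComponent (he : Orthonormal 𝕜 e) (a : ι → 𝕜) (x : H) :
    ⟪∑ j, a j • e j, perpComponent 𝕜 e x⟫_𝕜 = 0 := by
  simp [sum_inner, inner_smul_left, inner_perpComponent he]

theorem inner_perpComponent_right (he : Orthonormal 𝕜 e) (x y : H) :
    ⟪x, perpComponent 𝕜 e y⟫_𝕜 = ⟪perpComponent 𝕜 e x, perpComponent 𝕜 e y⟫_𝕜 := by
  conv_lhs => rw [← sum_inner_smul_add_perpComponent (𝕜 := 𝕜) e x]
  rw [inner_add_left, inner_sum_smul_perpComponent he, zero_add]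

theorem Orthonormal.norm_sum_smul_sq (he : Orthonormal 𝕜 e) (a : ι → 𝕜) :
    ‖∑ j, a j • e j‖ ^ 2 = ∑ j, ‖a j‖ ^ 2 := by
  rw [@norm_sq_eq_re_inner 𝕜, he.inner_sum]
  simp only [RCLike.conj_mul, ← ofReal_pow, ← ofReal_sum, ofReal_re]

theorem norm_sq_eq_sum_add_norm_perpComponent_sq (he : Orthonormal 𝕜 e) (x : H) :
    ‖x‖ ^ 2 = ∑ j, ‖⟪e j, x⟫_𝕜‖ ^ 2 + ‖perpComponent 𝕜 e x‖ ^ 2 := by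
  conv_lhs => rw [← sum_inner_smul_add_perpComponent (𝕜 := 𝕜) e x]
  rw [norm_add_sq (𝕜 := 𝕜), inner_sum_smul_perpComponent he, map_zero, mul_zero, add_zero,
    he.norm_sum_smul_sq]

variable {M : H →ₗ[𝕜] H} {ν : ι → ℝ} (hMe : ∀ j, M (e j) = (ν j : 𝕜) • e j)
include hMe

theorem map_sum_smul_of_eigen (a : ι → 𝕜) : M (∑ j, a j • e j) = ∑ j, (ν j * a j) • e j := by
  simp [map_sum, hMe, smul_smul, mul_comm]

theorem inner_map_perpComponent (he : Orthonormal 𝕜 e) (x : H) :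
    ⟪M x, perpComponent 𝕜 e x⟫_𝕜 = ⟪M (perpComponent 𝕜 e x), perpComponent 𝕜 e x⟫_𝕜 := by
  calc ⟪M x, perpComponent 𝕜 e x⟫_𝕜
      = ⟪M (∑ j, ⟪e j, x⟫_𝕜 • e j + perpComponent 𝕜 e x), perpComponent 𝕜 e x⟫_𝕜 := by
        rw [sum_inner_smul_add_perpComponent]
    _ = ⟪M (perpComponent 𝕜 e x), perpComponent 𝕜 e x⟫_𝕜 := by
        rw [map_add, inner_add_left, map_sum_smul_of_eigen hMe, inner_sum_smul_perpComponent he,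
          zero_add]

variable (hM : M.IsSymmetric) (he : Orthonormal 𝕜 e)
include hM he

theorem re_inner_map_self_eq (x : H) :
    re ⟪M x, x⟫_𝕜 = ∑ j, ν j * ‖⟪e j, x⟫_𝕜‖ ^ 2
      + re ⟪M (perpComponent 𝕜 e x), perpComponent 𝕜 e x⟫_𝕜 := by
  have hsplit : ⟪M x, x⟫_𝕜 = ⟪M x, ∑ j, ⟪e j, x⟫_𝕜 • e j⟫_𝕜 + ⟪M x, perpComponent 𝕜 e x⟫_𝕜 := by
    rw [← inner_add_right, sum_inner_smul_add_perpComponent]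
  rw [hsplit, inner_map_perpComponent hMe he, map_add, inner_sum, map_sum]
  congr 1
  refine Finset.sum_congr rfl fun j _ ↦ ?_
  rw [inner_smul_right, ← inner_conj_symm (M x), hM.inner_apply_of_eigen (hMe j),
    map_mul (starRingEnd 𝕜), conj_ofReal, mul_left_comm, mul_conj, ← ofReal_pow, ← ofReal_mul,
    ofReal_re]

theorem norm_map_sq_eq (x : H) :
    ‖M x‖ ^ 2 = ∑ j, ν j ^ 2 * ‖⟪e j, x⟫_𝕜‖ ^ 2 + ‖perpComponent 𝕜 e (M x)‖ ^ 2 := by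
  rw [norm_sq_eq_sum_add_norm_perpComponent_sq he (M x)]
  congr 1
  refine Finset.sum_congr rfl fun j _ ↦ ?_
  rw [hM.inner_apply_of_eigen (hMe j), norm_mul, norm_ofReal, mul_pow, sq_abs]

variable {δ : ℝ}
  (hgap : ∀ φ : H, (∀ j, ⟪e j, φ⟫_𝕜 = 0) → δ * ‖φ‖ ^ 2 ≤ re ⟪M φ, φ⟫_𝕜)
include hgap

theorem sum_mul_norm_inner_sq_le_re_inner_map (hδ : 0 ≤ δ) (x : H) :
    ∑ j, ν j * ‖⟪e j, x⟫_𝕜‖ ^ 2 ≤ re ⟪M x, x⟫_𝕜 := by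
  have hφ := hgap _ (inner_perpComponent he x)
  rw [re_inner_map_self_eq hMe hM he]
  nlinarith [sq_nonneg ‖perpComponent 𝕜 e x‖]

theorem mul_re_inner_map_sub_le (hδ : 0 < δ) (x : H) :
    δ * (re ⟪M x, x⟫_𝕜 - ∑ j, ν j * ‖⟪e j, x⟫_𝕜‖ ^ 2)
      ≤ ‖M x‖ ^ 2 - ∑ j, ν j ^ 2 * ‖⟪e j, x⟫_𝕜‖ ^ 2 := by
  rw [re_inner_map_self_eq hMe hM he, norm_map_sq_eq hMe hM he, add_sub_cancel_left,
    add_sub_cancel_left, ← inner_map_perpComponent hMe he, inner_perpComponent_right he]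
  refine mul_re_inner_le_norm_sq hδ ?_
  rw [← inner_perpComponent_right he, inner_map_perpComponent hMe he]
  exact hgap _ (inner_perpComponent he x)

end OrthonormalFamily

section Commutator

variable {A B : H →ₗ[𝕜] H}

theorem commutator_apply_of_eigen {x : H} {c : ℝ} (hx : A x = (c : 𝕜) • x) :
    (A ∘ₗ B - B ∘ₗ A) x = (A - (c : 𝕜) • LinearMap.id : H →ₗ[𝕜] H) (B x) := by
  simp [hx]

variable [Fintype ι] {e : ι → H} {μ : ι → ℝ} {L : ℝ}

theorem sum_rpow_mul_re_inner_commutator_le (hA : A.IsSymmetric) (hB : B.IsSymmetric)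
    (he : Orthonormal 𝕜 e) (hAe : ∀ i, A (e i) = (μ i : 𝕜) • e i) (hμL : ∀ i, μ i < L)
    (hRR : ∀ φ : H, (∀ j, ⟪e j, φ⟫_𝕜 = 0) → L * ‖φ‖ ^ 2 ≤ re ⟪A φ, φ⟫_𝕜) {p : ℝ} (hp : 2 ≤ p) :
    ∑ i, (L - μ i) ^ p * re ⟪(A ∘ₗ B - B ∘ₗ A) (e i), B (e i)⟫_𝕜
      ≤ p / 2 * ∑ i, (L - μ i) ^ (p - 1) * ‖(A ∘ₗ B - B ∘ₗ A) (e i)‖ ^ 2 := by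
  have key (i : ι) :
      0 ≤ re ⟪(A ∘ₗ B - B ∘ₗ A) (e i), B (e i)⟫_𝕜 - ∑ j, (μ j - μ i) * ‖⟪e j, B (e i)⟫_𝕜‖ ^ 2 ∧
      (L - μ i) * (re ⟪(A ∘ₗ B - B ∘ₗ A) (e i), B (e i)⟫_𝕜
        - ∑ j, (μ j - μ i) * ‖⟪e j, B (e i)⟫_𝕜‖ ^ 2)
      ≤ ‖(A ∘ₗ B - B ∘ₗ A) (e i)‖ ^ 2 - ∑ j, (μ j - μ i) ^ 2 * ‖⟪e j, B (e i)⟫_𝕜‖ ^ 2 := by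
    set M : H →ₗ[𝕜] H := A - (μ i : 𝕜) • LinearMap.id
    have hM : M.IsSymmetric := hA.sub (LinearMap.IsSymmetric.id.smul (conj_ofReal _))
    have hMe (j : ι) : M (e j) = ((μ j - μ i : ℝ) : 𝕜) • e j := by simp [M, hAe, sub_smul]
    have hgap (φ : H) (hφ : ∀ j, ⟪e j, φ⟫_𝕜 = 0) : (L - μ i) * ‖φ‖ ^ 2 ≤ re ⟪M φ, φ⟫_𝕜 := by
      rw [LinearMap.sub_apply, inner_sub_left, map_sub, LinearMap.smul_apply, LinearMap.id_apply,
        inner_smul_left, conj_ofReal, re_ofReal_mul, ← norm_sq_eq_re_inner]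
      linarith [hRR φ hφ]
    have hδ : 0 < L - μ i := sub_pos.2 (hμL i)
    rw [commutator_apply_of_eigen (hAe i)]
    exact ⟨sub_nonneg.2 (sum_mul_norm_inner_sq_le_re_inner_map hMe hM he hgap hδ.le _),
      mul_re_inner_map_sub_le hMe hM he hgap hδ _⟩
  refine sum_rpow_mul_le_of_symm hp (fun i ↦ sub_pos.2 (hμL i))
    (β := fun i j ↦ ‖⟪e j, B (e i)⟫_𝕜‖ ^ 2) (fun i j ↦ by rw [← hB, norm_inner_symm])
    (fun _ _ ↦ by positivity) (fun i ↦ ?_) (fun i ↦ ?_) <;>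
  simp only [sub_sub_sub_cancel_left]
  exacts [(key i).1, (key i).2]

theorem sum_rpow_mul_sum_re_inner_commutator_le {κ : Type*} [Fintype κ] {B : κ → H →ₗ[𝕜] H}
    (hA : A.IsSymmetric) (hB : ∀ k, (B k).IsSymmetric)
    (he : Orthonormal 𝕜 e) (hAe : ∀ i, A (e i) = (μ i : 𝕜) • e i) (hμL : ∀ i, μ i < L)
    (hRR : ∀ φ : H, (∀ j, ⟪e j, φ⟫_𝕜 = 0) → L * ‖φ‖ ^ 2 ≤ re ⟪A φ, φ⟫_𝕜) {p : ℝ} (hp : 2 ≤ p) :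
    ∑ i, (L - μ i) ^ p * ∑ k, re ⟪(A ∘ₗ B k - B k ∘ₗ A) (e i), B k (e i)⟫_𝕜
      ≤ p / 2 * ∑ i, (L - μ i) ^ (p - 1) * ∑ k, ‖(A ∘ₗ B k - B k ∘ₗ A) (e i)‖ ^ 2 := by
  simp only [Finset.mul_sum]
  rw [Finset.sum_comm, Finset.sum_comm (f := fun i k ↦ p / 2 * _)]
  refine Finset.sum_le_sum fun k _ ↦ ?_
  simpa only [Finset.mul_sum] using
    sum_rpow_mul_re_inner_commutator_le hA (hB k) he hAe hμL hRR hp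

end Commutator

end InnerProductSpace

open scoped ComplexInnerProductSpace

theorem stmt9_general
    {H : Type*} [NormedAddCommGroup H] [InnerProductSpace ℂ H]
    (A : H →ₗ[ℂ] H)
    (hAsymm : ∀ x y : H, ⟪A x, y⟫ = ⟪x, A y⟫)
    (u : ℕ → H) (lam : ℕ → ℝ)
    (huon : ∀ i j : ℕ, 1 ≤ i → 1 ≤ j → ⟪u i, u j⟫ = if i = j then 1 else 0)
    (hmono : ∀ i j : ℕ, 1 ≤ i → i ≤ j → lam i ≤ lam j)
    (heig : ∀ i : ℕ, 1 ≤ i → A (u i) = (lam i : ℂ) • u i)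
    (N : ℕ)
    (B : Fin N → H →ₗ[ℂ] H)
    (hBsymm : ∀ (k : Fin N) (x y : H), ⟪B k x, y⟫ = ⟪x, B k y⟫)
    (m : ℕ)
    (hRR : ∀ φ : H, (∀ j : ℕ, 1 ≤ j → j ≤ m → ⟪φ, u j⟫ = 0) →
      lam (m + 1) * ‖φ‖ ^ 2 ≤ (⟪A φ, φ⟫).re)
    (hgap : lam m < lam (m + 1))

    (p : ℝ) (hp : 2 ≤ p) :
    ∑ i ∈ Finset.Icc 1 m, (lam (m + 1) - lam i) ^ p * (∑ k : Fin N, (⟪(A ∘ₗ B k - B k ∘ₗ A) (u i), B k (u i)⟫).re)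
      ≤ (p / 2) *
        ∑ i ∈ Finset.Icc 1 m, (lam (m + 1) - lam i) ^ (p - 1) * (∑ k : Fin N, ‖(A ∘ₗ B k - B k ∘ₗ A) (u i)‖ ^ 2) := by
  have hmem {i : ℕ} (hi : i ∈ Finset.Icc 1 m) : 1 ≤ i ∧ i ≤ m := Finset.mem_Icc.1 hi
  have he : Orthonormal ℂ fun i : Finset.Icc 1 m ↦ u i := orthonormal_iff_ite.2 fun i j ↦ by
    simp only [huon i j (hmem i.2).1 (hmem j.2).1, Subtype.ext_iff]
  have hRR' (φ : H) (hφ : ∀ j : Finset.Icc 1 m, ⟪u j, φ⟫ = 0) :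
      lam (m + 1) * ‖φ‖ ^ 2 ≤ RCLike.re ⟪A φ, φ⟫ :=
    hRR φ fun j h₁ h₂ ↦ inner_eq_zero_symm.1 (hφ ⟨j, Finset.mem_Icc.2 ⟨h₁, h₂⟩⟩)
  have hsub := sum_rpow_mul_sum_re_inner_commutator_le hAsymm hBsymm he (fun i ↦ heig i (hmem i.2).1)
    (fun i ↦ (hmono i m (hmem i.2).1 (hmem i.2).2).trans_lt hgap) hRR' hp
  conv_lhs => rw [← Finset.sum_coe_sort]
  conv_rhs => rw [← Finset.sum_coe_sort]
  exact hsub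

theorem stmt9
    {H : Type*} [NormedAddCommGroup H] [InnerProductSpace ℂ H] [CompleteSpace H]
    (A : H →ₗ[ℂ] H)
    (hAsymm : ∀ x y : H, ⟪A x, y⟫ = ⟪x, A y⟫)
    (u : ℕ → H) (lam : ℕ → ℝ)
    (huon : ∀ i j : ℕ, 1 ≤ i → 1 ≤ j → ⟪u i, u j⟫ = if i = j then 1 else 0)
    (hmono : ∀ i j : ℕ, 1 ≤ i → i ≤ j → lam i ≤ lam j)
    (heig : ∀ i : ℕ, 1 ≤ i → A (u i) = (lam i : ℂ) • u i)
    (N : ℕ) (hN : 1 ≤ N)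
    (B : Fin N → H →ₗ[ℂ] H)
    (hBsymm : ∀ (k : Fin N) (x y : H), ⟪B k x, y⟫ = ⟪x, B k y⟫)
    (m : ℕ) (hm : 1 ≤ m)
    (hRR : ∀ φ : H, (∀ j : ℕ, 1 ≤ j → j ≤ m → ⟪φ, u j⟫ = 0) →
      lam (m + 1) * ‖φ‖ ^ 2 ≤ (⟪A φ, φ⟫).re)
    (hcomplete : (Submodule.span ℂ (u '' {i : ℕ | 1 ≤ i})).topologicalClosure = ⊤)
    (hgap : lam m < lam (m + 1))

    (p : ℝ) (hp : 2 ≤ p) :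
    ∑ i ∈ Finset.Icc 1 m, (lam (m + 1) - lam i) ^ p * (∑ k : Fin N, (⟪(A ∘ₗ B k - B k ∘ₗ A) (u i), B k (u i)⟫).re)
      ≤ (p / 2) *
        ∑ i ∈ Finset.Icc 1 m, (lam (m + 1) - lam i) ^ (p - 1) * (∑ k : Fin N, ‖(A ∘ₗ B k - B k ∘ₗ A) (u i)‖ ^ 2) :=
  stmt9_general A hAsymm u lam huon hmono heig N B hBsymm m hRR hgap p hp
end

section
/- Let m ≥ 1, let 0 < λ_1 ≤ λ_2 ≤ … ≤ λ_m be reals, let σ > λ_m, and let p₁ ≤ p₂ be real numbers. Then (Σ_{i=1}^m (σ − λ_i)^{p₁})·(Σ_{i=1}^m (σ − λ_i)^{p₂−1} λ_i) ≤ (Σ_{i=1}^m (σ − λ_i)^{p₂})·(Σ_{i=1}^m (σ − λ_i)^{p₁−1} λ_i), where x^t denotes the real power exp(t·log x) for x > 0. -/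
/-!
Put `a i = σ - lam i > 0`. Since `a ^ (p - 1) * lam = σ * a ^ (p - 1) - a ^ p`, the claim reduces,
as `σ ≥ 0`, to the monotonicity of `p ↦ (∑ a ^ p) / (∑ a ^ (p - 1))`. That is Chebyshev's sum
inequality for the similarly ordered families `a` and `a ^ (p₂ - p₁)` with weights `a ^ (p₁ - 1)`.
-/

open Finset

theorem MonovaryOn.sum_mul_sum_mul_le_sum_mul_sum_mul {ι α : Type*} [CommRing α] [LinearOrder α]
    [IsStrictOrderedRing α] {s : Finset ι} {w f g : ι → α} (hw : ∀ i ∈ s, 0 ≤ w i)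
    (hfg : MonovaryOn f g s) :
    (∑ i ∈ s, w i * f i) * (∑ i ∈ s, w i * g i) ≤ (∑ i ∈ s, w i) * ∑ i ∈ s, w i * (f i * g i) := by
  have hexpand : ∀ i j, w i * w j * ((f j - f i) * (g j - g i)) =
      w i * (w j * (f j * g j)) + w i * (f i * g i) * w j - w i * g i * (w j * f j) -
        w i * f i * (w j * g j) := fun i j => by ring
  have hsymm : ∑ i ∈ s, ∑ j ∈ s, w i * w j * ((f j - f i) * (g j - g i)) =
      2 * ((∑ i ∈ s, w i) * ∑ i ∈ s, w i * (f i * g i) -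
        (∑ i ∈ s, w i * f i) * ∑ i ∈ s, w i * g i) := by
    simp only [hexpand, sum_add_distrib, sum_sub_distrib, ← sum_mul_sum]
    ring
  have hnonneg : 0 ≤ ∑ i ∈ s, ∑ j ∈ s, w i * w j * ((f j - f i) * (g j - g i)) :=
    sum_nonneg fun i hi => sum_nonneg fun j hj =>
      mul_nonneg (mul_nonneg (hw i hi) (hw j hj)) (hfg.sub_mul_sub_nonneg hi hj)
  linarith

theorem monovaryOn_rpow_self {ι : Type*} {s : Set ι} {a : ι → ℝ} (ha : ∀ i ∈ s, 0 ≤ a i)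
    {q : ℝ} (hq : 0 ≤ q) : MonovaryOn (fun i => a i ^ q) a s :=
  fun i hi _ _ hij => Real.rpow_le_rpow (ha i hi) hij.le hq

theorem sum_rpow_mul_sum_rpow_sub_one_le_of_le {ι : Type*} (s : Finset ι) {a : ι → ℝ}
    (ha : ∀ i ∈ s, 0 < a i) {p₁ p₂ : ℝ} (hp : p₁ ≤ p₂) :
    (∑ i ∈ s, a i ^ p₁) * ∑ i ∈ s, a i ^ (p₂ - 1) ≤
      (∑ i ∈ s, a i ^ p₂) * ∑ i ∈ s, a i ^ (p₁ - 1) := by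
  have h₁ : ∀ i ∈ s, a i ^ (p₁ - 1) * a i = a i ^ p₁ := fun i hi => by
    rw [← Real.rpow_add_one (ha i hi).ne', sub_add_cancel]
  have h₂ : ∀ i ∈ s, a i ^ (p₁ - 1) * a i ^ (p₂ - p₁) = a i ^ (p₂ - 1) := fun i hi => by
    rw [← Real.rpow_add (ha i hi)]; ring_nf
  have h₃ : ∀ i ∈ s, a i ^ (p₁ - 1) * (a i * a i ^ (p₂ - p₁)) = a i ^ p₂ := fun i hi => by
    rw [← mul_assoc, h₁ i hi, ← Real.rpow_add (ha i hi)]; ring_nf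
  have cheb := (monovaryOn_rpow_self (s := s) (fun i hi => (ha i hi).le) (sub_nonneg.2 hp)).symm
    |>.sum_mul_sum_mul_le_sum_mul_sum_mul (w := fun i => a i ^ (p₁ - 1))
      fun i hi => (Real.rpow_pos_of_pos (ha i hi) _).le
  rw [sum_congr rfl h₁, sum_congr rfl h₂, sum_congr rfl h₃] at cheb
  exact cheb.trans_eq (mul_comm _ _)

theorem sum_rpow_mul_sum_rpow_sub_one_mul_le {ι : Type*} (s : Finset ι) (lam : ι → ℝ) {σ : ℝ}
    (hσ₀ : 0 ≤ σ) (hσ : ∀ i ∈ s, lam i < σ) {p₁ p₂ : ℝ} (hp : p₁ ≤ p₂) :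
    (∑ i ∈ s, (σ - lam i) ^ p₁) * (∑ i ∈ s, (σ - lam i) ^ (p₂ - 1) * lam i) ≤
      (∑ i ∈ s, (σ - lam i) ^ p₂) * ∑ i ∈ s, (σ - lam i) ^ (p₁ - 1) * lam i := by
  have hpos : ∀ i ∈ s, 0 < σ - lam i := fun i hi => sub_pos.2 (hσ i hi)
  have hlam : ∀ p : ℝ, ∑ i ∈ s, (σ - lam i) ^ (p - 1) * lam i =
      σ * ∑ i ∈ s, (σ - lam i) ^ (p - 1) - ∑ i ∈ s, (σ - lam i) ^ p := by
    intro p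
    rw [mul_sum, ← sum_sub_distrib]
    refine sum_congr rfl fun i hi => ?_
    rw [Real.rpow_sub_one (hpos i hi).ne']
    field_simp [(hpos i hi).ne']
    ring
  rw [hlam, hlam]
  linear_combination mul_le_mul_of_nonneg_left (sum_rpow_mul_sum_rpow_sub_one_le_of_le s hpos hp) hσ₀

theorem stmt16
    (m : ℕ) (hm : 1 ≤ m) (lam : ℕ → ℝ)
    (hpos : ∀ i : ℕ, 1 ≤ i → i ≤ m → 0 < lam i)
    (hmono : ∀ i j : ℕ, 1 ≤ i → i ≤ j → j ≤ m → lam i ≤ lam j)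
    (σ : ℝ) (hσ : lam m < σ)
    (p₁ p₂ : ℝ) (hp : p₁ ≤ p₂) :
    (∑ i ∈ Finset.Icc 1 m, (σ - lam i) ^ p₁) *
        (∑ i ∈ Finset.Icc 1 m, (σ - lam i) ^ (p₂ - 1) * lam i)
      ≤ (∑ i ∈ Finset.Icc 1 m, (σ - lam i) ^ p₂) *
        (∑ i ∈ Finset.Icc 1 m, (σ - lam i) ^ (p₁ - 1) * lam i) := by
  have hσ₀ : 0 ≤ σ := ((hpos m hm le_rfl).trans hσ).le
  refine sum_rpow_mul_sum_rpow_sub_one_mul_le _ lam hσ₀ (fun i hi => ?_) hp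
  obtain ⟨h1i, him⟩ := Finset.mem_Icc.mp hi
  exact (hmono i m h1i him le_rfl).trans_lt hσ
end

section
/- Let m ≥ 1, let 0 < λ_1 ≤ λ_2 ≤ … ≤ λ_m be reals, let c > 0, and let 0 ≤ p₁ ≤ p₂ ≤ 2. Suppose σ₁ is the unique zero of f_{p₁} in the open interval (λ_m, ∞) (i.e., f_{p₁}(σ₁) = 0 and f_{p₁}(σ) ≠ 0 for every other σ > λ_m), and suppose σ₂ > λ_m satisfies f_{p₂}(σ₂) = 0. Then σ₂ ≤ σ₁. -/
/-!
`f_p(σ)` is the mean of the summands `fSummand c p λᵢ σ = (σ - λᵢ)^(p-1) (σ - λᵢ - cλᵢ)`. For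
`p₁ ≤ p₂` each summand satisfies `fSummand c p₁ λ σ ≤ w^(p₁-p₂) fSummand c p₂ λ σ` with
`w = cσ/(1+c)`, since `σ - λ - cλ` has the sign of `σ - λ - w` and `a ↦ a^(p₁-p₂)` is antitone.
Hence `f_{p₁}(σ₂) ≤ 0`, while `f_{p₁}` is positive for large `σ`; by the intermediate value
theorem `f_{p₁}` vanishes somewhere in `[σ₂, ∞)`, and by uniqueness that zero is `σ₁`.
-/

open Finset Filter Set

noncomputable def fSummand (c p l σ : ℝ) : ℝ :=
  (σ - l) ^ p - c * ((σ - l) ^ (p - 1) * l)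

lemma fSummand_eq {c p l σ : ℝ} (h : l < σ) :
    fSummand c p l σ = (σ - l) ^ (p - 1) * (σ - l - c * l) := by
  have hpow : (σ - l) ^ p = (σ - l) ^ (p - 1) * (σ - l) := by
    rw [← Real.rpow_add_one (sub_pos.2 h).ne', sub_add_cancel]
  rw [fSummand, hpow]
  ring

lemma fSummand_le_rpow_mul {c p₁ p₂ l σ : ℝ} (hc : 0 < c) (hσ : 0 < σ) (hlσ : l < σ)
    (hp : p₁ ≤ p₂) :
    fSummand c p₁ l σ ≤ (c * σ / (1 + c)) ^ (p₁ - p₂) * fSummand c p₂ l σ := by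
  have ha : 0 < σ - l := sub_pos.2 hlσ
  have hw : 0 < c * σ / (1 + c) := by positivity
  have hq : p₁ - p₂ ≤ 0 := by linarith
  have hpow : (σ - l) ^ (p₁ - 1) = (σ - l) ^ (p₁ - p₂) * (σ - l) ^ (p₂ - 1) := by
    rw [← Real.rpow_add ha]
    ring_nf
  have hp₂ : 0 < (σ - l) ^ (p₂ - 1) := Real.rpow_pos_of_pos ha _
  rw [fSummand_eq hlσ, fSummand_eq hlσ, hpow, mul_assoc]
  rcases le_or_gt (c * l) (σ - l) with hcl | hcl
  · have hwa : c * σ / (1 + c) ≤ σ - l := by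
      rw [div_le_iff₀ (by linarith)]
      nlinarith
    exact mul_le_mul_of_nonneg_right (Real.rpow_le_rpow_of_nonpos hw hwa hq)
      (mul_nonneg hp₂.le (by linarith))
  · have haw : σ - l ≤ c * σ / (1 + c) := by
      rw [le_div_iff₀ (by linarith)]
      nlinarith
    exact mul_le_mul_of_nonpos_right (Real.rpow_le_rpow_of_nonpos ha haw hq)
      (mul_nonpos_of_nonneg_of_nonpos hp₂.le (by linarith))

lemma eventually_fSummand_pos (c p l : ℝ) : ∀ᶠ σ in atTop, 0 < fSummand c p l σ := by
  filter_upwards [eventually_gt_atTop l, eventually_gt_atTop (l + c * l)] with σ hl hcl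
  rw [fSummand_eq hl]
  exact mul_pos (Real.rpow_pos_of_pos (sub_pos.2 hl) _) (by linarith)

lemma continuousOn_fSummand (c p l : ℝ) : ContinuousOn (fSummand c p l) (Ioi l) := by
  have hsub : ContinuousOn (fun σ : ℝ => σ - l) (Ioi l) := by fun_prop
  have hne : ∀ σ ∈ Ioi l, σ - l ≠ 0 := fun σ hσ => (sub_pos.2 hσ).ne'
  exact (hsub.rpow_const fun σ hσ => .inl (hne σ hσ)).sub
    (continuousOn_const.mul ((hsub.rpow_const fun σ hσ => .inl (hne σ hσ)).mul continuousOn_const))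

section Sums

variable {ι : Type*} {s : Finset ι} {lam : ι → ℝ} {c : ℝ}

lemma mean_sub_mean_eq_sum_fSummand_div (n p σ : ℝ) :
    1 / n * ∑ i ∈ s, (σ - lam i) ^ p - c / n * ∑ i ∈ s, (σ - lam i) ^ (p - 1) * lam i =
      (∑ i ∈ s, fSummand c p (lam i) σ) / n := by
  simp only [fSummand, sum_sub_distrib, ← mul_sum]
  ring

lemma sum_fSummand_le_rpow_mul {p₁ p₂ σ : ℝ} (hc : 0 < c) (hσ : 0 < σ) (hp : p₁ ≤ p₂)
    (hlam : ∀ i ∈ s, lam i < σ) :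
    ∑ i ∈ s, fSummand c p₁ (lam i) σ ≤
      (c * σ / (1 + c)) ^ (p₁ - p₂) * ∑ i ∈ s, fSummand c p₂ (lam i) σ := by
  rw [mul_sum]
  exact sum_le_sum fun i hi => fSummand_le_rpow_mul hc hσ (hlam i hi) hp

lemma eventually_sum_fSummand_pos (hs : s.Nonempty) (p : ℝ) :
    ∀ᶠ σ in atTop, 0 < ∑ i ∈ s, fSummand c p (lam i) σ := by
  filter_upwards [(eventually_all_finset s).2 fun i _ => eventually_fSummand_pos c p (lam i)]
    with σ hσ
  exact sum_pos hσ hs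

lemma continuousOn_sum_fSummand {a : ℝ} (p : ℝ) (hlam : ∀ i ∈ s, lam i ≤ a) :
    ContinuousOn (fun σ => ∑ i ∈ s, fSummand c p (lam i) σ) (Ioi a) :=
  continuousOn_finsetSum s fun i hi =>
    (continuousOn_fSummand c p (lam i)).mono (Ioi_subset_Ioi (hlam i hi))

end Sums

lemma exists_zero_of_nonpos_of_eventually_pos {g : ℝ → ℝ} {a : ℝ} (hg : ContinuousOn g (Ici a))
    (ha : g a ≤ 0) (hpos : ∀ᶠ x in atTop, 0 < g x) : ∃ x, a ≤ x ∧ g x = 0 := by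
  obtain ⟨b, hb, hab⟩ := (hpos.and (eventually_ge_atTop a)).exists
  obtain ⟨x, hx, hgx⟩ := intermediate_value_Icc hab (hg.mono Icc_subset_Ici_self) ⟨ha, hb.le⟩
  exact ⟨x, hx.1, hgx⟩

theorem stmt17_general
    (m : ℕ) (hm : 1 ≤ m) (lam : ℕ → ℝ)
    (hpos : ∀ i : ℕ, 1 ≤ i → i ≤ m → 0 < lam i)
    (hmono : ∀ i j : ℕ, 1 ≤ i → i ≤ j → j ≤ m → lam i ≤ lam j)
    (c : ℝ) (hc : 0 < c)
    (p₁ p₂ : ℝ) (hp12 : p₁ ≤ p₂)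
    (σ₁ σ₂ : ℝ)
    (hσ₁uniq : ∀ σ : ℝ, lam m < σ → (fun (p : ℝ) (σ : ℝ) =>
      (1 / (m : ℝ)) * ∑ i ∈ Finset.Icc 1 m, (σ - lam i) ^ p -
        (c / (m : ℝ)) * ∑ i ∈ Finset.Icc 1 m, (σ - lam i) ^ (p - 1) * lam i) p₁ σ = 0 → σ = σ₁)
    (hσ₂ : lam m < σ₂)
    (hσ₂zero : (fun (p : ℝ) (σ : ℝ) =>
      (1 / (m : ℝ)) * ∑ i ∈ Finset.Icc 1 m, (σ - lam i) ^ p -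
        (c / (m : ℝ)) * ∑ i ∈ Finset.Icc 1 m, (σ - lam i) ^ (p - 1) * lam i) p₂ σ₂ = 0) :
    σ₂ ≤ σ₁ := by
  have hm0 : (m : ℝ) ≠ 0 := Nat.cast_ne_zero.2 (by omega)
  have hσ₂pos : 0 < σ₂ := (hpos m hm le_rfl).trans hσ₂
  have hlam : ∀ i ∈ Finset.Icc 1 m, lam i ≤ lam m := fun i hi => by
    rw [Finset.mem_Icc] at hi
    exact hmono i m hi.1 hi.2 le_rfl
  have hF₂ : ∑ i ∈ Finset.Icc 1 m, fSummand c p₂ (lam i) σ₂ = 0 := by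
    simpa only [mean_sub_mean_eq_sum_fSummand_div, div_eq_zero_iff, hm0, or_false] using hσ₂zero
  have hF₁ : ∑ i ∈ Finset.Icc 1 m, fSummand c p₁ (lam i) σ₂ ≤ 0 := by
    have := sum_fSummand_le_rpow_mul hc hσ₂pos hp12 fun i hi => (hlam i hi).trans_lt hσ₂
    rwa [hF₂, mul_zero] at this
  have hcont := (continuousOn_sum_fSummand (c := c) p₁ hlam).mono (Ici_subset_Ioi.2 hσ₂)
  obtain ⟨x, hσ₂x, hFx⟩ := exists_zero_of_nonpos_of_eventually_pos hcont hF₁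
    (eventually_sum_fSummand_pos (Finset.nonempty_Icc.2 hm) p₁)
  have hx : x = σ₁ := hσ₁uniq x (hσ₂.trans_le hσ₂x) (by
    simp only [mean_sub_mean_eq_sum_fSummand_div, hFx, zero_div])
  exact hx ▸ hσ₂x

theorem stmt17
    (m : ℕ) (hm : 1 ≤ m) (lam : ℕ → ℝ)
    (hpos : ∀ i : ℕ, 1 ≤ i → i ≤ m → 0 < lam i)
    (hmono : ∀ i j : ℕ, 1 ≤ i → i ≤ j → j ≤ m → lam i ≤ lam j)
    (c : ℝ) (hc : 0 < c)
    (p₁ p₂ : ℝ) (hp0 : 0 ≤ p₁) (hp12 : p₁ ≤ p₂) (hp2 : p₂ ≤ 2)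
    (σ₁ σ₂ : ℝ) (hσ₁ : lam m < σ₁)
    (hσ₁zero : (fun (p : ℝ) (σ : ℝ) =>
      (1 / (m : ℝ)) * ∑ i ∈ Finset.Icc 1 m, (σ - lam i) ^ p -
        (c / (m : ℝ)) * ∑ i ∈ Finset.Icc 1 m, (σ - lam i) ^ (p - 1) * lam i) p₁ σ₁ = 0)
    (hσ₁uniq : ∀ σ : ℝ, lam m < σ → (fun (p : ℝ) (σ : ℝ) =>
      (1 / (m : ℝ)) * ∑ i ∈ Finset.Icc 1 m, (σ - lam i) ^ p -
        (c / (m : ℝ)) * ∑ i ∈ Finset.Icc 1 m, (σ - lam i) ^ (p - 1) * lam i) p₁ σ = 0 → σ = σ₁)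
    (hσ₂ : lam m < σ₂)
    (hσ₂zero : (fun (p : ℝ) (σ : ℝ) =>
      (1 / (m : ℝ)) * ∑ i ∈ Finset.Icc 1 m, (σ - lam i) ^ p -
        (c / (m : ℝ)) * ∑ i ∈ Finset.Icc 1 m, (σ - lam i) ^ (p - 1) * lam i) p₂ σ₂ = 0) :
    σ₂ ≤ σ₁ :=
  stmt17_general m hm lam hpos hmono c hc p₁ p₂ hp12 σ₁ σ₂ hσ₁uniq hσ₂ hσ₂zero
end

section
/- Let m ≥ 1, let 0 < λ_1 ≤ λ_2 ≤ … ≤ λ_m be reals, let c > 0, and let S be a real number. Suppose that for every real σ ≤ S: Σ_{i=1}^m ((σ − λ_i)₊)² ≤ 2c Σ_{i=1}^m (σ − λ_i)₊ · λ_i, where x₊ = max(x, 0). Then for every real p ≥ 2 and every real σ ≤ S: Σ_{i=1}^m ((σ − λ_i)₊)^p ≤ p·c Σ_{i=1}^m ((σ − λ_i)₊)^{p−1} λ_i, where for t > 0 the power 0^t is interpreted as 0. -/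
/-!
Multiply the hypothesis at level `σ - t` (for `t ≥ 0`) by `t ^ (p - 3)` and integrate in `t`.
Since `(σ - t - λ)₊ = ((σ - λ)₊ - t)₊` for `t ≥ 0`, the kernel integrals
`∫₀^∞ t ^ (p - 3) (a - t)₊² dt = 2 a ^ p / (p (p - 1) (p - 2))` and
`∫₀^∞ t ^ (p - 3) (a - t)₊ dt = a ^ (p - 1) / ((p - 1) (p - 2))` turn the two sides into
`∑ (σ - λᵢ)₊ ^ p` and `p c ∑ (σ - λᵢ)₊ ^ (p - 1) λᵢ` up to the same factor.
The integrands vanish beyond `∑ᵢ (σ - λᵢ)₊`, so integrating up to that bound suffices.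
For `p = 2` the claim is the hypothesis itself.
-/

open MeasureTheory intervalIntegral

section KernelIntegrals

variable {q : ℝ}

lemma max_sub_max_zero_eq (b : ℝ) {t : ℝ} (ht : 0 ≤ t) : max (max b 0 - t) 0 = max (b - t) 0 := by
  rcases le_total b 0 with h | h
  · rw [max_eq_right h, max_eq_right (by linarith), max_eq_right (by linarith)]
  · rw [max_eq_left h]

lemma integral_rpow_mul_posPart_sub_pow (hq : -1 < q) {n : ℕ} (hn : n ≠ 0) {b M : ℝ} (hM : 0 ≤ M)
    (hb : b ≤ M) :
    ∫ t in (0 : ℝ)..M, t ^ q * max (b - t) 0 ^ n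
      = ∫ t in (0 : ℝ)..max b 0, t ^ q * (max b 0 - t) ^ n := by
  set a := max b 0
  have haM : a ≤ M := max_le hb hM
  have hint (x y : ℝ) : IntervalIntegrable (fun t => t ^ q * max (a - t) 0 ^ n) volume x y :=
    (intervalIntegrable_rpow' hq).mul_continuousOn (by fun_prop)
  have hshift : ∫ t in (0 : ℝ)..M, t ^ q * max (b - t) 0 ^ n
      = ∫ t in (0 : ℝ)..M, t ^ q * max (a - t) 0 ^ n :=
    integral_congr fun t ht => by
      rw [Set.uIcc_of_le hM] at ht
      simp only [a, max_sub_max_zero_eq b ht.1]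
  have htail : ∫ t in a..M, t ^ q * max (a - t) 0 ^ n = 0 := by
    refine (integral_congr fun t ht => ?_).trans integral_zero
    rw [Set.uIcc_of_le haM] at ht
    simp [max_eq_right (sub_nonpos.2 ht.1 : a - t ≤ 0), zero_pow hn]
  rw [hshift, ← integral_add_adjacent_intervals (hint 0 a) (hint a M), htail, add_zero]
  refine integral_congr fun t ht => ?_
  rw [Set.uIcc_of_le (le_max_right b 0)] at ht
  rw [max_eq_left (sub_nonneg.2 ht.2)]

lemma integral_rpow_from_zero (hq : -1 < q) (b : ℝ) :
    ∫ t in (0 : ℝ)..b, t ^ q = b ^ (q + 1) / (q + 1) := by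
  rw [integral_rpow (Or.inl hq), Real.zero_rpow (by linarith), sub_zero]

lemma integral_rpow_mul_sub (hq : -1 < q) {a : ℝ} (ha : 0 ≤ a) :
    ∫ t in (0 : ℝ)..a, t ^ q * (a - t) = a ^ (q + 2) / ((q + 1) * (q + 2)) := by
  have hint (r : ℝ) (hr : -1 < r) := intervalIntegrable_rpow' (a := 0) (b := a) hr
  calc ∫ t in (0 : ℝ)..a, t ^ q * (a - t)
      = ∫ t in (0 : ℝ)..a, (a * t ^ q - t ^ (q + 1)) :=
        integral_congr fun t ht => by
          rw [Set.uIcc_of_le ha] at ht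
          rw [Real.rpow_add_one' ht.1 (by linarith)]
          ring
    _ = a * (a ^ (q + 1) / (q + 1)) - a ^ (q + 2) / (q + 2) := by
        rw [integral_sub ((hint q hq).const_mul a) (hint (q + 1) (by linarith)),
          intervalIntegral.integral_const_mul, integral_rpow_from_zero hq,
          integral_rpow_from_zero (by linarith), add_assoc, one_add_one_eq_two]
    _ = a ^ (q + 2) / ((q + 1) * (q + 2)) := by
        have hq1 : q + 1 ≠ 0 := by linarith
        have hq2 : q + 2 ≠ 0 := by linarith
        rw [Real.rpow_add' ha hq1, Real.rpow_add' ha hq2, Real.rpow_one, Real.rpow_two]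
        field_simp
        ring

lemma integral_rpow_mul_sub_sq (hq : -1 < q) {a : ℝ} (ha : 0 ≤ a) :
    ∫ t in (0 : ℝ)..a, t ^ q * (a - t) ^ 2
      = 2 * a ^ (q + 3) / ((q + 1) * (q + 2) * (q + 3)) := by
  have hint (r : ℝ) (hr : -1 < r) := intervalIntegrable_rpow' (a := 0) (b := a) hr
  have hq1 : q + 1 ≠ 0 := by linarith
  have hq2 : q + 2 ≠ 0 := by linarith
  have hq3 : q + 3 ≠ 0 := by linarith
  calc ∫ t in (0 : ℝ)..a, t ^ q * (a - t) ^ 2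
      = ∫ t in (0 : ℝ)..a, (a ^ 2 * t ^ q - 2 * a * t ^ (q + 1) + t ^ (q + 2)) :=
        integral_congr fun t ht => by
          rw [Set.uIcc_of_le ha] at ht
          rw [Real.rpow_add' ht.1 hq1, Real.rpow_add' ht.1 hq2, Real.rpow_one, Real.rpow_two]
          ring
    _ = a ^ 2 * (a ^ (q + 1) / (q + 1)) - 2 * a * (a ^ (q + 2) / (q + 2))
          + a ^ (q + 3) / (q + 3) := by
        rw [integral_add (((hint q hq).const_mul _).sub ((hint (q + 1) (by linarith)).const_mul _))
            (hint (q + 2) (by linarith)),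
          integral_sub ((hint q hq).const_mul _) ((hint (q + 1) (by linarith)).const_mul _),
          intervalIntegral.integral_const_mul, intervalIntegral.integral_const_mul,
          integral_rpow_from_zero hq, integral_rpow_from_zero (by linarith),
          integral_rpow_from_zero (by linarith)]
        norm_num [add_assoc]
    _ = 2 * a ^ (q + 3) / ((q + 1) * (q + 2) * (q + 3)) := by
        rw [Real.rpow_add' ha hq1, Real.rpow_add' ha hq2, Real.rpow_add' ha hq3, Real.rpow_one,
          Real.rpow_two, Real.rpow_ofNat]
        field_simp
        ring

lemma integral_rpow_mul_posPart_sub (hq : -1 < q) {b M : ℝ} (hM : 0 ≤ M) (hb : b ≤ M) :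
    ∫ t in (0 : ℝ)..M, t ^ q * max (b - t) 0
      = max b 0 ^ (q + 2) / ((q + 1) * (q + 2)) := by
  rw [← integral_rpow_mul_sub hq (le_max_right b 0)]
  simpa only [pow_one] using integral_rpow_mul_posPart_sub_pow hq one_ne_zero hM hb

lemma integral_rpow_mul_posPart_sub_sq (hq : -1 < q) {b M : ℝ} (hM : 0 ≤ M) (hb : b ≤ M) :
    ∫ t in (0 : ℝ)..M, t ^ q * max (b - t) 0 ^ 2
      = 2 * max b 0 ^ (q + 3) / ((q + 1) * (q + 2) * (q + 3)) := by
  rw [← integral_rpow_mul_sub_sq hq (le_max_right b 0)]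
  exact integral_rpow_mul_posPart_sub_pow hq two_ne_zero hM hb

end KernelIntegrals

theorem sum_posPart_rpow_add_three_le {ι : Type*} (s : Finset ι) (lam w : ι → ℝ) {c S : ℝ}
    (h2 : ∀ σ ≤ S, ∑ i ∈ s, max (σ - lam i) 0 ^ 2 ≤ 2 * c * ∑ i ∈ s, max (σ - lam i) 0 * w i)
    {q : ℝ} (hq : -1 < q) {σ : ℝ} (hσ : σ ≤ S) :
    ∑ i ∈ s, max (σ - lam i) 0 ^ (q + 3)
      ≤ (q + 3) * c * ∑ i ∈ s, max (σ - lam i) 0 ^ (q + 2) * w i := by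
  set M := ∑ i ∈ s, max (σ - lam i) 0
  have hM : 0 ≤ M := Finset.sum_nonneg fun i _ => le_max_right _ _
  have hbM : ∀ i ∈ s, σ - lam i ≤ M := fun i hi =>
    (le_max_left _ _).trans (Finset.single_le_sum (fun j _ => le_max_right (σ - lam j) 0) hi)
  have hint_sq (i : ι) :
      IntervalIntegrable (fun t => t ^ q * max (σ - lam i - t) 0 ^ 2) volume 0 M :=
    (intervalIntegrable_rpow' hq).mul_continuousOn (by fun_prop)
  have hint_lin (i : ι) :
      IntervalIntegrable (fun t => t ^ q * max (σ - lam i - t) 0 * w i) volume 0 M :=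
    ((intervalIntegrable_rpow' hq).mul_continuousOn (by fun_prop)).mul_const (w i)
  have hpt : ∀ t ∈ Set.Icc 0 M, ∑ i ∈ s, t ^ q * max (σ - lam i - t) 0 ^ 2
      ≤ 2 * c * ∑ i ∈ s, t ^ q * max (σ - lam i - t) 0 * w i := by
    intro t ht
    have h := mul_le_mul_of_nonneg_left (h2 (σ - t) (by linarith [ht.1])) (Real.rpow_nonneg ht.1 q)
    simp only [Finset.mul_sum, sub_right_comm σ t] at h ⊢
    exact h.trans_eq (Finset.sum_congr rfl fun i _ => by ring)
  have hq1 : q + 1 ≠ 0 := by linarith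
  have hq2 : q + 2 ≠ 0 := by linarith
  have hq3 : q + 3 ≠ 0 := by linarith
  have hfactor : 0 ≤ (q + 1) * (q + 2) * (q + 3) / 2 :=
    div_nonneg (mul_nonneg (mul_nonneg (by linarith) (by linarith)) (by linarith)) zero_le_two
  have hsq : ∀ i ∈ s, ∫ t in (0 : ℝ)..M, t ^ q * max (σ - lam i - t) 0 ^ 2
      = 2 * max (σ - lam i) 0 ^ (q + 3) / ((q + 1) * (q + 2) * (q + 3)) := fun i hi =>
    integral_rpow_mul_posPart_sub_sq hq hM (hbM i hi)
  have hlin : ∀ i ∈ s, ∫ t in (0 : ℝ)..M, t ^ q * max (σ - lam i - t) 0 * w i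
      = max (σ - lam i) 0 ^ (q + 2) / ((q + 1) * (q + 2)) * w i := fun i hi => by
    rw [intervalIntegral.integral_mul_const, integral_rpow_mul_posPart_sub hq hM (hbM i hi)]
  calc ∑ i ∈ s, max (σ - lam i) 0 ^ (q + 3)
      = (q + 1) * (q + 2) * (q + 3) / 2
          * ∑ i ∈ s, ∫ t in (0 : ℝ)..M, t ^ q * max (σ - lam i - t) 0 ^ 2 := by
        rw [Finset.sum_congr rfl hsq, Finset.mul_sum]
        refine Finset.sum_congr rfl fun i _ => ?_
        field_simp
    _ = (q + 1) * (q + 2) * (q + 3) / 2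
          * ∫ t in (0 : ℝ)..M, ∑ i ∈ s, t ^ q * max (σ - lam i - t) 0 ^ 2 := by
        rw [intervalIntegral.integral_finsetSum fun i _ => hint_sq i]
    _ ≤ (q + 1) * (q + 2) * (q + 3) / 2
          * ∫ t in (0 : ℝ)..M, 2 * c * ∑ i ∈ s, t ^ q * max (σ - lam i - t) 0 * w i := by
        gcongr
        refine intervalIntegral.integral_mono_on hM ?_ ?_ hpt
        · simpa only [Finset.sum_fn] using IntervalIntegrable.sum s fun i _ => hint_sq i
        · simpa only [Finset.sum_fn] using
            (IntervalIntegrable.sum s fun i _ => hint_lin i).const_mul (2 * c)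
    _ = (q + 3) * c * ∑ i ∈ s, max (σ - lam i) 0 ^ (q + 2) * w i := by
        rw [intervalIntegral.integral_const_mul,
          intervalIntegral.integral_finsetSum fun i _ => hint_lin i,
          Finset.sum_congr rfl hlin, Finset.mul_sum, Finset.mul_sum, Finset.mul_sum]
        refine Finset.sum_congr rfl fun i _ => ?_
        field_simp

theorem sum_posPart_rpow_le_of_sq_le {ι : Type*} (s : Finset ι) (lam w : ι → ℝ) {c S : ℝ}
    (h2 : ∀ σ ≤ S, ∑ i ∈ s, max (σ - lam i) 0 ^ 2 ≤ 2 * c * ∑ i ∈ s, max (σ - lam i) 0 * w i)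
    {p : ℝ} (hp : 2 ≤ p) {σ : ℝ} (hσ : σ ≤ S) :
    ∑ i ∈ s, max (σ - lam i) 0 ^ p ≤ p * c * ∑ i ∈ s, max (σ - lam i) 0 ^ (p - 1) * w i := by
  rcases hp.eq_or_lt with rfl | hp
  · simpa only [Real.rpow_two, show (2 : ℝ) - 1 = 1 by norm_num, Real.rpow_one] using h2 σ hσ
  · have h := sum_posPart_rpow_add_three_le s lam w h2 (q := p - 3) (by linarith) hσ
    rwa [sub_add_cancel, show p - 3 + 2 = p - 1 by ring] at h

theorem stmt18_general
    (m : ℕ) (lam : ℕ → ℝ)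
    (c : ℝ) (S : ℝ)
    (h2 : ∀ σ : ℝ, σ ≤ S →
      ∑ i ∈ Finset.Icc 1 m, (max (σ - lam i) 0) ^ 2
        ≤ 2 * c * ∑ i ∈ Finset.Icc 1 m, (max (σ - lam i) 0) * lam i) :
    ∀ p : ℝ, 2 ≤ p → ∀ σ : ℝ, σ ≤ S →
      ∑ i ∈ Finset.Icc 1 m, (max (σ - lam i) 0) ^ p
        ≤ p * c * ∑ i ∈ Finset.Icc 1 m, (max (σ - lam i) 0) ^ (p - 1) * lam i :=
  fun _ hp _ hσ => sum_posPart_rpow_le_of_sq_le _ lam lam h2 hp hσ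

theorem stmt18
    (m : ℕ) (hm : 1 ≤ m) (lam : ℕ → ℝ)
    (hpos : ∀ i : ℕ, 1 ≤ i → i ≤ m → 0 < lam i)
    (hmono : ∀ i j : ℕ, 1 ≤ i → i ≤ j → j ≤ m → lam i ≤ lam j)
    (c : ℝ) (hc : 0 < c) (S : ℝ)
    (h2 : ∀ σ : ℝ, σ ≤ S →
      ∑ i ∈ Finset.Icc 1 m, (max (σ - lam i) 0) ^ 2
        ≤ 2 * c * ∑ i ∈ Finset.Icc 1 m, (max (σ - lam i) 0) * lam i) :
    ∀ p : ℝ, 2 ≤ p → ∀ σ : ℝ, σ ≤ S →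
      ∑ i ∈ Finset.Icc 1 m, (max (σ - lam i) 0) ^ p
        ≤ p * c * ∑ i ∈ Finset.Icc 1 m, (max (σ - lam i) 0) ^ (p - 1) * lam i :=
  stmt18_general m lam c S h2
end

section
/- Let m ≥ 1, let 0 < λ_1 ≤ λ_2 ≤ … ≤ λ_m be reals, let c > 0, let q ≥ p ≥ 2 be reals, and let S be a real number. Suppose that for every real σ ≤ S: Σ_{i=1}^m ((σ − λ_i)₊)^p ≤ p·c Σ_{i=1}^m ((σ − λ_i)₊)^{p−1} λ_i, where x₊ = max(x, 0). Then for every real σ ≤ S: Σ_{i=1}^m ((σ − λ_i)₊)^q ≤ q·c Σ_{i=1}^m ((σ − λ_i)₊)^{q−1} λ_i, where for t > 0 the power 0^t is interpreted as 0. -/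
/-!
For `0 < α` and `0 < γ`, `∫₀^∞ t^(α-1) (x - t)₊^γ dt = B(α, γ + 1) x₊^(α+γ)`. Integrating the
hypothesis at `σ - t`, `t ≥ 0`, against `t^(q-p-1)` therefore turns the `p`-inequality into
`B(q-p, p+1) Σ (σ - λᵢ)₊^q ≤ p B(q-p, p) Σ (σ - λᵢ)₊^(q-1) cλᵢ`, and the recurrence
`p B(q-p, p) = q B(q-p, p+1)` of the beta function gives the `q`-inequality.
-/

open scoped ComplexInnerProductSpace

open MeasureTheory Set ProbabilityTheory

namespace ProbabilityTheory

lemma beta_add_one_right {α β : ℝ} (hα : 0 < α) (hβ : 0 < β) :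
    (α + β) * beta α (β + 1) = β * beta α β := by
  have hαβ : Real.Gamma (α + β) ≠ 0 := (Real.Gamma_pos_of_pos (by positivity)).ne'
  rw [beta, beta, Real.Gamma_add_one hβ.ne', ← add_assoc, Real.Gamma_add_one (by positivity)]
  field_simp

lemma integral_rpow_mul_sub_rpow {α β a : ℝ} (hα : 0 < α) (hβ : 0 < β) (ha : 0 < a) :
    ∫ t in 0..a, t ^ (α - 1) * (a - t) ^ (β - 1) = a ^ (α + β - 1) * beta α β := by
  have hC := Complex.betaIntegral_scaled α β ha
  have hint : ∫ t in 0..a, (t : ℂ) ^ ((α : ℂ) - 1) * ((a : ℂ) - t) ^ ((β : ℂ) - 1)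
      = ((∫ t in 0..a, t ^ (α - 1) * (a - t) ^ (β - 1) : ℝ) : ℂ) := by
    rw [← intervalIntegral.integral_ofReal]
    refine intervalIntegral.integral_congr fun t ht => ?_
    rw [uIcc_of_le ha.le] at ht
    push_cast
    rw [Complex.ofReal_cpow ht.1, Complex.ofReal_cpow (sub_nonneg.2 ht.2)]
    push_cast; rfl
  have hpow : (a : ℂ) ^ ((α : ℂ) + β - 1) = ((a ^ (α + β - 1) : ℝ) : ℂ) := by
    rw [Complex.ofReal_cpow ha.le]; push_cast; rfl
  rw [hint, hpow] at hC
  have hre := congrArg Complex.re hC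
  rwa [Complex.ofReal_re, Complex.re_ofReal_mul, ← beta_eq_betaIntegralReal α β hα hβ] at hre

end ProbabilityTheory

lemma intervalIntegrable_rpow_mul_posPart_rpow {α γ : ℝ} (hα : 0 < α) (hγ : 0 < γ) (b x y : ℝ) :
    IntervalIntegrable (fun t => t ^ (α - 1) * max (b - t) 0 ^ γ) volume x y :=
  (intervalIntegral.intervalIntegrable_rpow' (by linarith)).mul_continuousOn <|
    Continuous.continuousOn <|
      ((continuous_const.sub continuous_id).max continuous_const).rpow_const fun _ => Or.inr hγ.le

lemma integral_rpow_mul_posPart_rpow_of_le {α γ b x y : ℝ} (hγ : 0 < γ) (hbx : b ≤ x)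
    (hxy : x ≤ y) :
    ∫ t in x..y, t ^ (α - 1) * max (b - t) 0 ^ γ = 0 := by
  refine (intervalIntegral.integral_congr fun t ht => ?_).trans intervalIntegral.integral_zero
  rw [uIcc_of_le hxy] at ht
  simp [max_eq_right (by linarith [ht.1] : b - t ≤ 0), Real.zero_rpow hγ.ne']

lemma integral_rpow_mul_posPart_rpow {α γ b A : ℝ} (hα : 0 < α) (hγ : 0 < γ) (hA : max b 0 ≤ A) :
    ∫ t in 0..A, t ^ (α - 1) * max (b - t) 0 ^ γ = max b 0 ^ (α + γ) * beta α (γ + 1) := by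
  rcases le_or_gt b 0 with hb | hb
  · rw [integral_rpow_mul_posPart_rpow_of_le hγ hb (le_trans (le_max_right b 0) hA),
      max_eq_right hb, Real.zero_rpow (by positivity), zero_mul]
  have hbA : b ≤ A := le_trans (le_max_left b 0) hA
  have hscaled := integral_rpow_mul_sub_rpow hα (add_pos hγ one_pos) hb
  rw [add_sub_cancel_right, ← add_assoc, add_sub_cancel_right] at hscaled
  rw [max_eq_left hb.le, ← intervalIntegral.integral_add_adjacent_intervals
      (intervalIntegrable_rpow_mul_posPart_rpow hα hγ b 0 b)
      (intervalIntegrable_rpow_mul_posPart_rpow hα hγ b b A),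
    integral_rpow_mul_posPart_rpow_of_le hγ le_rfl hbA, add_zero, ← hscaled]
  refine intervalIntegral.integral_congr fun t ht => ?_
  rw [uIcc_of_le hb.le] at ht
  simp only [max_eq_left (sub_nonneg.2 ht.2)]

section RieszMeans

variable {ι : Type*} (s : Finset ι) (lam w : ι → ℝ) {α γ σ A : ℝ}

lemma intervalIntegrable_rpow_mul_sum_posPart_rpow (hα : 0 < α) (hγ : 0 < γ) :
    IntervalIntegrable (fun t => t ^ (α - 1) * ∑ i ∈ s, max (σ - t - lam i) 0 ^ γ * w i)
      volume 0 A := by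
  simp_rw [Finset.mul_sum, ← mul_assoc, sub_right_comm σ _ (lam _)]
  have := IntervalIntegrable.sum s fun i _ =>
    (intervalIntegrable_rpow_mul_posPart_rpow hα hγ (σ - lam i) 0 A).mul_const (w i)
  rwa [Finset.sum_fn] at this

lemma integral_rpow_mul_sum_posPart_rpow (hα : 0 < α) (hγ : 0 < γ)
    (hA : ∀ i ∈ s, max (σ - lam i) 0 ≤ A) :
    ∫ t in 0..A, t ^ (α - 1) * ∑ i ∈ s, max (σ - t - lam i) 0 ^ γ * w i
      = beta α (γ + 1) * ∑ i ∈ s, max (σ - lam i) 0 ^ (α + γ) * w i := by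
  simp_rw [Finset.mul_sum, ← mul_assoc, sub_right_comm σ _ (lam _)]
  rw [intervalIntegral.integral_finsetSum fun i _ =>
    (intervalIntegrable_rpow_mul_posPart_rpow hα hγ (σ - lam i) 0 A).mul_const (w i)]
  refine Finset.sum_congr rfl fun i hi => ?_
  rw [intervalIntegral.integral_mul_const, integral_rpow_mul_posPart_rpow hα hγ (hA i hi)]
  ring

theorem sum_posPart_rpow_le_of_le {p q S : ℝ} (hp : 1 < p) (hpq : p ≤ q)
    (hP : ∀ σ ≤ S, ∑ i ∈ s, max (σ - lam i) 0 ^ p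
      ≤ p * ∑ i ∈ s, max (σ - lam i) 0 ^ (p - 1) * w i)
    (hσ : σ ≤ S) :
    ∑ i ∈ s, max (σ - lam i) 0 ^ q ≤ q * ∑ i ∈ s, max (σ - lam i) 0 ^ (q - 1) * w i := by
  rcases hpq.eq_or_lt with rfl | hpq
  · exact hP σ hσ
  set A := ∑ i ∈ s, max (σ - lam i) 0
  have hA : ∀ i ∈ s, max (σ - lam i) 0 ≤ A := fun i hi =>
    Finset.single_le_sum (fun j _ => le_max_right (σ - lam j) 0) hi
  have hα : 0 < q - p := sub_pos.2 hpq
  have hp0 : 0 < p := by linarith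
  have hp1 : 0 < p - 1 := sub_pos.2 hp
  have hmono : ∫ t in 0..A, t ^ (q - p - 1) * ∑ i ∈ s, max (σ - t - lam i) 0 ^ p * 1
      ≤ ∫ t in 0..A, p * (t ^ (q - p - 1) * ∑ i ∈ s, max (σ - t - lam i) 0 ^ (p - 1) * w i) := by
    refine intervalIntegral.integral_mono_on
      (Finset.sum_nonneg fun i _ => le_max_right (σ - lam i) 0)
      (intervalIntegrable_rpow_mul_sum_posPart_rpow s lam _ hα hp0)
      ((intervalIntegrable_rpow_mul_sum_posPart_rpow s lam w hα hp1).const_mul p) fun t ht => ?_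
    simp only [mul_one]
    rw [mul_left_comm]
    exact mul_le_mul_of_nonneg_left (hP (σ - t) (by linarith [ht.1])) (Real.rpow_nonneg ht.1 _)
  rw [intervalIntegral.integral_const_mul, integral_rpow_mul_sum_posPart_rpow s lam _ hα hp0 hA,
    integral_rpow_mul_sum_posPart_rpow s lam w hα hp1 hA, sub_add_cancel, sub_add_cancel,
    show q - p + (p - 1) = q - 1 by ring] at hmono
  simp only [mul_one] at hmono
  have hrec := beta_add_one_right hα hp0
  rw [sub_add_cancel] at hrec
  rw [← mul_assoc, ← hrec, mul_assoc, mul_left_comm q] at hmono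
  exact le_of_mul_le_mul_left hmono (beta_pos hα (add_pos hp0 one_pos))

end RieszMeans

theorem stmt19_general
    (m : ℕ) (lam : ℕ → ℝ)
    (c : ℝ)
    (p q : ℝ) (hp : 2 ≤ p) (hpq : p ≤ q) (S : ℝ)
    (hP : ∀ σ : ℝ, σ ≤ S →
      ∑ i ∈ Finset.Icc 1 m, (max (σ - lam i) 0) ^ p
        ≤ p * c * ∑ i ∈ Finset.Icc 1 m, (max (σ - lam i) 0) ^ (p - 1) * lam i) :
    ∀ σ : ℝ, σ ≤ S →
      ∑ i ∈ Finset.Icc 1 m, (max (σ - lam i) 0) ^ q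
        ≤ q * c * ∑ i ∈ Finset.Icc 1 m, (max (σ - lam i) 0) ^ (q - 1) * lam i := by
  have hweight : ∀ (r : ℝ) (f : ℕ → ℝ), r * c * ∑ i ∈ Finset.Icc 1 m, f i * lam i
      = r * ∑ i ∈ Finset.Icc 1 m, f i * (c * lam i) := by
    intro r f
    simp_rw [mul_assoc r, Finset.mul_sum, mul_left_comm c]
  simp_rw [hweight] at hP ⊢
  exact fun σ => sum_posPart_rpow_le_of_le _ lam _ (by linarith) hpq hP

theorem stmt19
    (m : ℕ) (hm : 1 ≤ m) (lam : ℕ → ℝ)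
    (hpos : ∀ i : ℕ, 1 ≤ i → i ≤ m → 0 < lam i)
    (hmono : ∀ i j : ℕ, 1 ≤ i → i ≤ j → j ≤ m → lam i ≤ lam j)
    (c : ℝ) (hc : 0 < c)
    (p q : ℝ) (hp : 2 ≤ p) (hpq : p ≤ q) (S : ℝ)
    (hP : ∀ σ : ℝ, σ ≤ S →
      ∑ i ∈ Finset.Icc 1 m, (max (σ - lam i) 0) ^ p
        ≤ p * c * ∑ i ∈ Finset.Icc 1 m, (max (σ - lam i) 0) ^ (p - 1) * lam i) :
    ∀ σ : ℝ, σ ≤ S →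
      ∑ i ∈ Finset.Icc 1 m, (max (σ - lam i) 0) ^ q
        ≤ q * c * ∑ i ∈ Finset.Icc 1 m, (max (σ - lam i) 0) ^ (q - 1) * lam i :=
  stmt19_general m lam c p q hp hpq S hP
end
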